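/- arXiv:math/0608068 — 10 statements merged into one kernel-verified Lean document; each statement's English description precedes it below -/
import Mathlib

section
/- If O = (0,0,0), P = (x,y,z), Q = (u,v,w) are vertices of an equilateral triangle with integer coordinates and side length l, then l² is an even integer; specifically xu + yv + zw = l²/2 is an integer. -/
/-- If `O`, `P=(x,y,z)`, `Q=(u,v,w)` form an equilateral triangle in `ℤ³`
with side length `l`, then `l²` is even; specifically `x*u+y*v+z*w = l²/2`. -/
theorem side_sq_even (x y z u v w : ℤ) (l : ℝ)
    (h1 : l ^ 2 = ((x ^ 2 + y ^ 2 + z ^ 2 : ℤ) : ℝ))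
    (h2 : l ^ 2 = ((u ^ 2 + v ^ 2 + w ^ 2 : ℤ) : ℝ))
    (h3 : l ^ 2 = (((x - u) ^ 2 + (y - v) ^ 2 + (z - w) ^ 2 : ℤ) : ℝ)) :
    l ^ 2 = 2 * ((x * u + y * v + z * w : ℤ) : ℝ) := by
  push_cast at h1 h2 h3 ⊢
  linear_combination h1 + h2 - h3
end

section
/- If O, P = (x,y,z), Q = (u,v,w) form an equilateral triangle with integer coordinates, O the origin, and side length l, then the cross product (a,b,c) = OP × OQ satisfies a² + b² + c² = 3d² where d = l²/2 is an integer. -/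
/-!
Write `d = P ⬝ Q`. Polarization of `|P - Q|² = |P|² = |Q|²` gives `|P|² = 2d`, and Lagrange's
identity then gives `|P ⨯ Q|² = |P|² |Q|² - d² = 4d² - d² = 3d²`.
-/

open Matrix

section Equilateral

variable {R : Type*} [CommRing R] {P Q : Fin 3 → R}

theorem dotProduct_self_eq_two_mul_of_equilateral (hQ : Q ⬝ᵥ Q = P ⬝ᵥ P)
    (hPQ : (P - Q) ⬝ᵥ (P - Q) = P ⬝ᵥ P) : P ⬝ᵥ P = 2 * (P ⬝ᵥ Q) := by
  have polarization : (P - Q) ⬝ᵥ (P - Q) = P ⬝ᵥ P - 2 * (P ⬝ᵥ Q) + Q ⬝ᵥ Q := by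
    simp only [sub_dotProduct, dotProduct_sub, dotProduct_comm Q P]
    ring
  linear_combination hPQ - hQ - polarization

theorem cross_dot_cross_self_of_equilateral (hQ : Q ⬝ᵥ Q = P ⬝ᵥ P)
    (hPQ : (P - Q) ⬝ᵥ (P - Q) = P ⬝ᵥ P) :
    (P ⨯₃ Q) ⬝ᵥ (P ⨯₃ Q) = 3 * (P ⬝ᵥ Q) ^ 2 := by
  have hP := dotProduct_self_eq_two_mul_of_equilateral hQ hPQ
  rw [cross_dot_cross, hQ, hP, dotProduct_comm Q P]
  ring

end Equilateral

/-- For an equilateral triangle `O, P=(x,y,z), Q=(u,v,w)` in `ℤ³` with side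
length `l`, the cross product `(a,b,c) = OP × OQ` satisfies `a²+b²+c² = 3d²`
with `d = l²/2 ∈ ℤ`. -/
theorem cross_product_eq (x y z u v w : ℤ) (l : ℝ)
    (h1 : l ^ 2 = ((x ^ 2 + y ^ 2 + z ^ 2 : ℤ) : ℝ))
    (h2 : l ^ 2 = ((u ^ 2 + v ^ 2 + w ^ 2 : ℤ) : ℝ))
    (h3 : l ^ 2 = (((x - u) ^ 2 + (y - v) ^ 2 + (z - w) ^ 2 : ℤ) : ℝ)) :
    ∃ d : ℤ, l ^ 2 = 2 * (d : ℝ) ∧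
      (y * w - v * z) ^ 2 + (z * u - x * w) ^ 2 + (x * v - y * u) ^ 2 = 3 * d ^ 2 := by
  set P : Fin 3 → ℤ := ![x, y, z]
  set Q : Fin 3 → ℤ := ![u, v, w]
  have norm_sq (a b c : ℤ) : ![a, b, c] ⬝ᵥ ![a, b, c] = a ^ 2 + b ^ 2 + c ^ 2 := by
    simp [dotProduct, Fin.sum_univ_three, sq]
  have hQ : Q ⬝ᵥ Q = P ⬝ᵥ P := by
    rw [norm_sq, norm_sq]; exact_mod_cast h2.symm.trans h1
  have hPQ : (P - Q) ⬝ᵥ (P - Q) = P ⬝ᵥ P := by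
    rw [show P - Q = ![x - u, y - v, z - w] by simp [P, Q], norm_sq, norm_sq]
    exact_mod_cast h3.symm.trans h1
  refine ⟨P ⬝ᵥ Q, ?_, ?_⟩
  · rw [h1, ← norm_sq, dotProduct_self_eq_two_mul_of_equilateral hQ hPQ]
    push_cast; rfl
  · have h := cross_dot_cross_self_of_equilateral hQ hPQ
    simp only [P, Q, cross_apply, dotProduct, Fin.sum_univ_three, cons_val] at h ⊢
    linear_combination h
end

section
/- Let (a,b,c,d) be integers with a² + b² + c² = 3d², d ≠ 0, and let P = (u,v,w) be a point with au + bv + cw = 0. Then the point Q = (u/2 + (cv - bw)/(2d), v/2 + (aw - cu)/(2d), w/2 + (bu - av)/(2d)) satisfies aQ₁ + bQ₂ + cQ₃ = 0, |OQ| = |OP|, and |PQ| = |OP|, i.e., triangle OPQ is equilateral. -/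
/-- Given integers `a,b,c,d` with `a²+b²+c²=3d²`, `d ≠ 0`, and a point
`P=(u,v,w)` in the plane `aα+bβ+cγ=0`, the point `Q` given by the formulas
lies in the same plane and `OPQ` is equilateral. -/
theorem third_point_equilateral (a b c d : ℤ) (hd : d ≠ 0)
    (habc : a ^ 2 + b ^ 2 + c ^ 2 = 3 * d ^ 2)
    (u v w : ℝ) (hP : (a : ℝ) * u + (b : ℝ) * v + (c : ℝ) * w = 0) :
    let qx : ℝ := u / 2 + ((c : ℝ) * v - (b : ℝ) * w) / (2 * (d : ℝ))
    let qy : ℝ := v / 2 + ((a : ℝ) * w - (c : ℝ) * u) / (2 * (d : ℝ))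
    let qz : ℝ := w / 2 + ((b : ℝ) * u - (a : ℝ) * v) / (2 * (d : ℝ))
    (a : ℝ) * qx + (b : ℝ) * qy + (c : ℝ) * qz = 0 ∧
    qx ^ 2 + qy ^ 2 + qz ^ 2 = u ^ 2 + v ^ 2 + w ^ 2 ∧
    (qx - u) ^ 2 + (qy - v) ^ 2 + (qz - w) ^ 2 = u ^ 2 + v ^ 2 + w ^ 2 := by
  have hd' : (d : ℝ) ≠ 0 := Int.cast_ne_zero.mpr hd
  have habc' : (a : ℝ) ^ 2 + (b : ℝ) ^ 2 + (c : ℝ) ^ 2 = 3 * (d : ℝ) ^ 2 := by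
    exact_mod_cast habc
  intro qx qy qz
  refine ⟨?_, ?_, ?_⟩
  · show (a : ℝ) * (u / 2 + ((c : ℝ) * v - (b : ℝ) * w) / (2 * (d : ℝ)))
      + (b : ℝ) * (v / 2 + ((a : ℝ) * w - (c : ℝ) * u) / (2 * (d : ℝ)))
      + (c : ℝ) * (w / 2 + ((b : ℝ) * u - (a : ℝ) * v) / (2 * (d : ℝ))) = 0
    field_simp
    linear_combination ((d:ℝ)) * hP
  · show (u / 2 + ((c : ℝ) * v - (b : ℝ) * w) / (2 * (d : ℝ))) ^ 2
      + (v / 2 + ((a : ℝ) * w - (c : ℝ) * u) / (2 * (d : ℝ))) ^ 2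
      + (w / 2 + ((b : ℝ) * u - (a : ℝ) * v) / (2 * (d : ℝ))) ^ 2
      = u ^ 2 + v ^ 2 + w ^ 2
    field_simp
    linear_combination ((u^2+v^2+w^2)) * habc' - (((a:ℝ)*u+(b:ℝ)*v+(c:ℝ)*w)) * hP
  · show (u / 2 + ((c : ℝ) * v - (b : ℝ) * w) / (2 * (d : ℝ)) - u) ^ 2
      + (v / 2 + ((a : ℝ) * w - (c : ℝ) * u) / (2 * (d : ℝ)) - v) ^ 2
      + (w / 2 + ((b : ℝ) * u - (a : ℝ) * v) / (2 * (d : ℝ)) - w) ^ 2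
      = u ^ 2 + v ^ 2 + w ^ 2
    field_simp
    linear_combination ((u^2+v^2+w^2)) * habc' - (((a:ℝ)*u+(b:ℝ)*v+(c:ℝ)*w)) * hP
end

section
/- For every odd integer d ≥ 3 there exist integers a, b, c with a² + b² + c² = 3d² such that not all of |a|, |b|, |c| equal |d| (i.e., a nontrivial solution exists). -/
/-! Write the odd number `d` as `w² + x² + y² + z²`. The quaternion `q = w + xi + yj + zk` acts
on `ℤ³` by `v ↦ q v q̄`, which multiplies lengths by `d`, so the images of the sign vectors
`(1,1,1)`, `(-1,1,1)`, `(1,-1,1)`, `(1,1,-1)` solve `a² + b² + c² = 3d²`. If all four were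
trivial, then, the off-diagonal entries of the matrix being even and `2d ≢ 0 mod 4`, those entries
would vanish; this kills all pairwise products of `w, x, y, z`, so `d = (w + x + y + z)²`.
In that case a nontrivial solution for the smaller odd `m = w + x + y + z`, scaled by `m`, is one
for `d`. -/

open Matrix

def HasNontrivialRep (d : ℤ) : Prop :=
  ∃ a b c : ℤ, a ^ 2 + b ^ 2 + c ^ 2 = 3 * d ^ 2 ∧ ¬(|a| = |d| ∧ |b| = |d| ∧ |c| = |d|)

theorem hasNontrivialRep_of_dotProduct_self {d : ℤ} (v : Fin 3 → ℤ) (hv : v ⬝ᵥ v = 3 * d ^ 2)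
    (hnt : ¬∀ i, |v i| = |d|) : HasNontrivialRep d := by
  refine ⟨v 0, v 1, v 2, by simpa [dotProduct, Fin.sum_univ_three, sq] using hv, ?_⟩
  rintro ⟨h0, h1, h2⟩
  exact hnt fun i => by fin_cases i <;> assumption

theorem HasNontrivialRep.mul_left {d : ℤ} (h : HasNontrivialRep d) {k : ℤ} (hk : k ≠ 0) :
    HasNontrivialRep (k * d) := by
  obtain ⟨a, b, c, hsum, hnt⟩ := h
  refine ⟨k * a, k * b, k * c, by linear_combination k ^ 2 * hsum, ?_⟩
  have hcancel (t : ℤ) : |k * t| = |k * d| → |t| = |d| := by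
    simpa only [abs_mul] using mul_left_cancel₀ (abs_ne_zero.mpr hk)
  exact fun ⟨ha, hb, hc⟩ => hnt ⟨hcancel a ha, hcancel b hb, hcancel c hc⟩

theorem Int.eq_of_abs_eq_of_four_dvd_sub {a b d : ℤ} (hd : Odd d) (ha : |a| = |d|)
    (hb : |b| = |d|) (h : 4 ∣ a - b) : a = b := by
  obtain ⟨k, rfl⟩ := hd
  rcases abs_eq_abs.mp ha with ha | ha <;> rcases abs_eq_abs.mp hb with hb | hb <;> omega

section EulerRodrigues

variable {R : Type*} [CommRing R] (w x y z : R)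

/-- The matrix of `v ↦ q v q̄` for `q = w + xi + yj + zk`. -/
def eulerRodrigues : Matrix (Fin 3) (Fin 3) R :=
  !![w ^ 2 + x ^ 2 - y ^ 2 - z ^ 2, 2 * (x * y - w * z), 2 * (x * z + w * y);
     2 * (x * y + w * z), w ^ 2 - x ^ 2 + y ^ 2 - z ^ 2, 2 * (y * z - w * x);
     2 * (x * z - w * y), 2 * (y * z + w * x), w ^ 2 - x ^ 2 - y ^ 2 + z ^ 2]

theorem eulerRodrigues_mulVec_dotProduct_self (v : Fin 3 → R) :
    eulerRodrigues w x y z *ᵥ v ⬝ᵥ eulerRodrigues w x y z *ᵥ v =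
      (w ^ 2 + x ^ 2 + y ^ 2 + z ^ 2) ^ 2 * (v ⬝ᵥ v) := by
  simp [eulerRodrigues, dotProduct, mulVec, Fin.sum_univ_three]
  ring

theorem two_dvd_eulerRodrigues {i j : Fin 3} (hij : i ≠ j) :
    2 ∣ eulerRodrigues w x y z i j := by
  fin_cases i <;> fin_cases j <;> simp [eulerRodrigues] at hij ⊢

theorem isSquare_of_eulerRodrigues_offDiag_eq_zero
    (h : ∀ i j, i ≠ j → eulerRodrigues w x y z i j = 0) :
    IsSquare (w ^ 2 + x ^ 2 + y ^ 2 + z ^ 2) := by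
  have h10 := h 1 0 (by decide)
  have h02 := h 0 2 (by decide)
  have h21 := h 2 1 (by decide)
  simp only [eulerRodrigues, of_apply, cons_val', cons_val_zero, cons_val_one, cons_val_two,
    empty_val', cons_val_fin_one, tail_cons, vecHead] at h10 h02 h21
  exact ⟨w + x + y + z, by linear_combination -h10 - h02 - h21⟩

end EulerRodrigues

theorem hasNontrivialRep_or_isSquare_of_odd (w x y z : ℤ)
    (hodd : Odd (w ^ 2 + x ^ 2 + y ^ 2 + z ^ 2)) :
    HasNontrivialRep (w ^ 2 + x ^ 2 + y ^ 2 + z ^ 2) ∨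
      IsSquare (w ^ 2 + x ^ 2 + y ^ 2 + z ^ 2) := by
  set N := w ^ 2 + x ^ 2 + y ^ 2 + z ^ 2
  set M := eulerRodrigues w x y z
  refine or_iff_not_imp_left.mpr fun hnone => isSquare_of_eulerRodrigues_offDiag_eq_zero w x y z ?_
  have htriv (v : Fin 3 → ℤ) (hv : v ⬝ᵥ v = 3) (i : Fin 3) : |(M *ᵥ v) i| = |N| := by
    by_contra hi
    refine hnone (hasNontrivialRep_of_dotProduct_self _ ?_ fun h => hi (h i))
    rw [eulerRodrigues_mulVec_dotProduct_self, hv]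
    ring
  have hones : (1 : Fin 3 → ℤ) ⬝ᵥ 1 = 3 := by decide
  intro i j hij
  have hflip : (1 - 2 • Pi.single j 1 : Fin 3 → ℤ) ⬝ᵥ (1 - 2 • Pi.single j 1) = 3 := by
    fin_cases j <;> decide
  have hdiff : (M *ᵥ 1) i - (M *ᵥ (1 - 2 • Pi.single j 1)) i = 2 * M i j := by
    rw [← Pi.sub_apply, ← mulVec_sub, sub_sub_cancel, mulVec_smul, mulVec_single_one]
    rfl
  have heq := Int.eq_of_abs_eq_of_four_dvd_sub hodd (htriv _ hones i) (htriv _ hflip i)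
    (hdiff ▸ mul_dvd_mul_left 2 (two_dvd_eulerRodrigues w x y z hij))
  linarith

theorem hasNontrivialRep_of_odd (n : ℕ) (hodd : Odd n) (hn : 3 ≤ n) : HasNontrivialRep n := by
  induction n using Nat.strong_induction_on with
  | _ n ih =>
  obtain ⟨w, x, y, z, hsum⟩ := Nat.sum_four_squares n
  have hN : (n : ℤ) = (w : ℤ) ^ 2 + (x : ℤ) ^ 2 + (y : ℤ) ^ 2 + (z : ℤ) ^ 2 := by
    exact_mod_cast hsum.symm
  rcases hasNontrivialRep_or_isSquare_of_odd w x y z (hN ▸ by exact_mod_cast hodd) with hrep | hsq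
  · exact hN ▸ hrep
  obtain ⟨m, rfl⟩ := Int.isSquare_natCast_iff.mp (hN ▸ hsq)
  have hm : Odd m := (Nat.odd_mul.mp hodd).1
  have hm3 : 3 ≤ m := by
    obtain ⟨k, rfl⟩ := hm
    rcases k with _ | k <;> nlinarith
  have hrep := (ih m (by nlinarith) hm hm3).mul_left (k := m) (by positivity)
  exact_mod_cast hrep

/-- For every odd integer `d ≥ 3` there is a nontrivial solution of
`a²+b²+c² = 3d²`. -/
theorem nontrivial_solution_exists (d : ℤ) (hodd : Odd d) (hd : 3 ≤ d) :
    ∃ a b c : ℤ, a ^ 2 + b ^ 2 + c ^ 2 = 3 * d ^ 2 ∧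
      ¬(|a| = |d| ∧ |b| = |d| ∧ |c| = |d|) := by
  lift d to ℕ using by omega
  exact hasNontrivialRep_of_odd d (by exact_mod_cast hodd) (by exact_mod_cast hd)
end

section
/- If dₙ₊₁ = 2dₙ + cₙ and cₙ₊₁ = 3dₙ + 2cₙ with d₁ = 7, c₁ = 1, then 3dₙ² - cₙ² = 146 for all n ≥ 1; in particular the equation 3d² - c² = 146 has infinitely many integer solutions. -/
/-!
The step `(d, c) ↦ (2d + c, 3d + 2c)` is multiplication by the unit `2 + √3` of norm `1`
in `ℤ[√3]`, so it preserves the form `3d² - c²`; starting from `(7, 1)` this gives `146`.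
The step keeps both coordinates positive and then strictly increases `d`, so the orbit
consists of infinitely many distinct solutions.
-/

theorem three_mul_sq_sub_sq_step {R : Type*} [CommRing R] (x y : R) :
    3 * (2 * x + y) ^ 2 - (3 * x + 2 * y) ^ 2 = 3 * x ^ 2 - y ^ 2 := by
  ring

section Recurrence

variable {d c : ℕ → ℤ}
  (hrec : ∀ n, 1 ≤ n → d (n + 1) = 2 * d n + c n ∧ c (n + 1) = 3 * d n + 2 * c n)
include hrec

theorem three_mul_sq_sub_sq_eq_of_recurrence {n : ℕ} (hn : 1 ≤ n) :
    3 * d n ^ 2 - c n ^ 2 = 3 * d 1 ^ 2 - c 1 ^ 2 := by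
  induction n, hn using Nat.le_induction with
  | base => rfl
  | succ k hk ih =>
    obtain ⟨hd, hc⟩ := hrec k hk
    rw [hd, hc, three_mul_sq_sub_sq_step, ih]

theorem pos_of_recurrence (hd1 : 0 < d 1) (hc1 : 0 < c 1) {n : ℕ} (hn : 1 ≤ n) :
    0 < d n ∧ 0 < c n := by
  induction n, hn using Nat.le_induction with
  | base => exact ⟨hd1, hc1⟩
  | succ k hk ih =>
    obtain ⟨hd, hc⟩ := hrec k hk
    rw [hd, hc]
    omega

theorem strictMono_of_recurrence (hd1 : 0 < d 1) (hc1 : 0 < c 1) :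
    StrictMono fun n ↦ d (n + 1) := by
  refine strictMono_nat_of_lt_succ fun n ↦ ?_
  obtain ⟨hd, -⟩ := hrec (n + 1) (by omega)
  obtain ⟨hdpos, hcpos⟩ := pos_of_recurrence hrec hd1 hc1 (n := n + 1) (by omega)
  simp only [hd]
  omega

end Recurrence

/-- The recurrence `dₙ₊₁ = 2dₙ + cₙ`, `cₙ₊₁ = 3dₙ + 2cₙ` with `d₁ = 7`,
`c₁ = 1` satisfies `3dₙ² - cₙ² = 146` for all `n ≥ 1`; in particular
`3d² - c² = 146` has infinitely many integer solutions. -/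
theorem pell_like_recurrence (d c : ℕ → ℤ) (hd1 : d 1 = 7) (hc1 : c 1 = 1)
    (hrec : ∀ n, 1 ≤ n → d (n + 1) = 2 * d n + c n ∧ c (n + 1) = 3 * d n + 2 * c n) :
    (∀ n, 1 ≤ n → 3 * (d n) ^ 2 - (c n) ^ 2 = 146) ∧
    {p : ℤ × ℤ | 3 * p.1 ^ 2 - p.2 ^ 2 = 146}.Infinite := by
  have hform : ∀ n, 1 ≤ n → 3 * d n ^ 2 - c n ^ 2 = 146 := fun n hn ↦ by
    rw [three_mul_sq_sub_sq_eq_of_recurrence hrec hn, hd1, hc1]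
    norm_num
  have hmono := strictMono_of_recurrence hrec (by omega) (by omega)
  refine ⟨hform, Set.infinite_of_injective_forall_mem (f := fun n ↦ (d (n + 1), c (n + 1)))
    (fun a b hab ↦ hmono.injective (congrArg Prod.fst hab)) fun n ↦ hform (n + 1) (by omega)⟩
end

section
/- For any integers m, n, the points O = (0,0,0), P = (7m - 4n, 5n, -m - 3n), Q = (3m - 7n, 5m, -4m + n) form an equilateral triangle with side length 5√(2(m² - mn + n²)), and P, Q lie in the plane x + 5y + 7z = 0. -/
/-- Parametrization of the family in the plane x + 5y + 7z = 0: the points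
`O`, `P`, `Q` form an equilateral triangle of side length `5√(2(m²-mn+n²))`. -/
theorem T_param_11 (m n : ℤ) :
    (7*m - 4*n) ^ 2 + (5*n) ^ 2 + (-m - 3*n) ^ 2 = 2 * 5 ^ 2 * (m ^ 2 - m * n + n ^ 2) ∧
    (3*m - 7*n) ^ 2 + (5*m) ^ 2 + (-4*m + n) ^ 2 = 2 * 5 ^ 2 * (m ^ 2 - m * n + n ^ 2) ∧
    ((7*m - 4*n) - (3*m - 7*n)) ^ 2 + ((5*n) - (5*m)) ^ 2 + ((-m - 3*n) - (-4*m + n)) ^ 2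
      = 2 * 5 ^ 2 * (m ^ 2 - m * n + n ^ 2) ∧
    Real.sqrt (((7*m - 4*n : ℤ) : ℝ) ^ 2 + ((5*n : ℤ) : ℝ) ^ 2 + ((-m - 3*n : ℤ) : ℝ) ^ 2)
      = 5 * Real.sqrt (2 * ((m : ℝ) ^ 2 - m * n + n ^ 2)) ∧
    (7*m - 4*n) + 5 * (5*n) + 7 * (-m - 3*n) = 0 ∧ (3*m - 7*n) + 5 * (5*m) + 7 * (-4*m + n) = 0 := by
  refine ⟨by ring, by ring, by ring, ?_, by ring, by ring⟩
  have hOP : ((7*m - 4*n : ℤ) : ℝ) ^ 2 + ((5*n : ℤ) : ℝ) ^ 2 + ((-m - 3*n : ℤ) : ℝ) ^ 2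
      = 5 ^ 2 * (2 * ((m : ℝ) ^ 2 - m * n + n ^ 2)) := by
    push_cast
    ring
  rw [hOP, Real.sqrt_mul (by positivity), Real.sqrt_sq (by norm_num)]
end

section
/- For any integers m, n, the points O = (0,0,0), P = (8m - 9n, 5m + 4n, -3m - n), Q = (-m - 8n, 9m - 5n, -4m + 3n) form an equilateral triangle with side length 7√(2(m² - mn + n²)), and P, Q lie in the plane x + 5y + 11z = 0. -/
/-- Parametrization of the family in the plane x + 5y + 11z = 0: the points
`O`, `P`, `Q` form an equilateral triangle of side length `7√(2(m²-mn+n²))`. -/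
theorem T_param_12 (m n : ℤ) :
    (8*m - 9*n) ^ 2 + (5*m + 4*n) ^ 2 + (-3*m - n) ^ 2 = 2 * 7 ^ 2 * (m ^ 2 - m * n + n ^ 2) ∧
    (-m - 8*n) ^ 2 + (9*m - 5*n) ^ 2 + (-4*m + 3*n) ^ 2 = 2 * 7 ^ 2 * (m ^ 2 - m * n + n ^ 2) ∧
    ((8*m - 9*n) - (-m - 8*n)) ^ 2 + ((5*m + 4*n) - (9*m - 5*n)) ^ 2 + ((-3*m - n) - (-4*m + 3*n)) ^ 2
      = 2 * 7 ^ 2 * (m ^ 2 - m * n + n ^ 2) ∧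
    Real.sqrt (((8*m - 9*n : ℤ) : ℝ) ^ 2 + ((5*m + 4*n : ℤ) : ℝ) ^ 2 + ((-3*m - n : ℤ) : ℝ) ^ 2)
      = 7 * Real.sqrt (2 * ((m : ℝ) ^ 2 - m * n + n ^ 2)) ∧
    (8*m - 9*n) + 5 * (5*m + 4*n) + 11 * (-3*m - n) = 0 ∧ (-m - 8*n) + 5 * (9*m - 5*n) + 11 * (-4*m + 3*n) = 0 := by
  refine ⟨by ring, by ring, by ring, ?_, by ring, by ring⟩
  have hOP : ((8*m - 9*n : ℤ) : ℝ) ^ 2 + ((5*m + 4*n : ℤ) : ℝ) ^ 2 + ((-3*m - n : ℤ) : ℝ) ^ 2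
      = 7 ^ 2 * (2 * ((m : ℝ) ^ 2 - m * n + n ^ 2)) := by
    push_cast
    ring
  rw [hOP, Real.sqrt_mul (by positivity), Real.sqrt_sq (by norm_num)]
end

section
/- Let t be an integer of the form t = 3x² - y² for some integers x, y. Then t is a sum of two squares of integers if and only if t = 2(m² - mn + n²) for some integers m, n. -/
open ZMod Finset

private lemma legendre_h3 (p : ℕ) [Fact p.Prime] (hp2 : p ≠ 2) :
    legendreSym p 3 = (-1) ^ (p / 2) * legendreSym 3 (p : ℤ) := by
  have := legendreSym.quadratic_reciprocity' (p := 3) (q := p) (by norm_num) hp2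
  simpa using this

private lemma legendre_neg_three (p : ℕ) [Fact p.Prime] (hp2 : p ≠ 2) :
    legendreSym p (-3) = legendreSym 3 p := by
  have hodd : p % 2 = 1 := Nat.Prime.eq_two_or_odd (Fact.out) |>.resolve_left hp2
  have h1 : legendreSym p (-3) = legendreSym p (-1) * legendreSym p 3 := by
    rw [← legendreSym.mul]; norm_num
  have h2 : legendreSym p (-1) = χ₄ p := legendreSym.at_neg_one hp2
  have h4 : (χ₄ p : ℤ) = (-1) ^ (p / 2) := χ₄_eq_neg_one_pow hodd
  rw [h1, h2, legendre_h3 p hp2, h4, ← mul_assoc, ← pow_add]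
  simp [← two_mul, pow_mul]

private lemma legendre_three_mod (p : ℕ) [Fact p.Prime] (h : p % 3 = 2) :
    legendreSym 3 (p : ℤ) = -1 := by
  rw [legendreSym.eq_neg_one_iff']
  rw [show ((p : ZMod 3)) = ((p % 3 : ℕ) : ZMod 3) from (ZMod.natCast_mod p 3).symm, h]
  decide

private lemma legendre_three_mod' (p : ℕ) [Fact p.Prime] (h : p % 3 = 1) :
    legendreSym 3 (p : ℤ) = 1 := by
  have h0 : ((p : ℤ) : ZMod 3) ≠ 0 := by
    rw [show (((p:ℤ)) : ZMod 3) = ((p % 3 : ℕ) : ZMod 3) by push_cast [ZMod.natCast_mod]; norm_cast, h]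
    decide
  rw [legendreSym.eq_one_iff _ h0]
  rw [show (((p:ℤ)) : ZMod 3) = ((p % 3 : ℕ) : ZMod 3) by push_cast [ZMod.natCast_mod]; norm_cast, h]
  decide

private lemma qa (p : ℕ) [Fact p.Prime] (hp2 : p ≠ 2) (h : p % 3 = 2) :
    legendreSym p (-3) = -1 := by
  rw [legendre_neg_three p hp2, legendre_three_mod p h]

private lemma qa' (p : ℕ) [Fact p.Prime] (h : p % 3 = 1) :
    IsSquare (-3 : ZMod p) := by
  have hp2 : p ≠ 2 := by rintro rfl; norm_num at h
  have hp3 : p ≠ 3 := by rintro rfl; norm_num at h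
  have h0 : ((-3 : ℤ) : ZMod p) ≠ 0 := by
    rw [Ne, ZMod.intCast_zmod_eq_zero_iff_dvd]
    intro hdvd
    have h1 : (p : ℤ) ∣ 3 := by
      have := (dvd_neg (α := ℤ)).mpr hdvd
      simpa using this
    have h2 : p ∣ 3 := by exact_mod_cast h1
    exact hp3 ((Nat.prime_dvd_prime_iff_eq Fact.out (by norm_num)).mp h2)
  have h1 : legendreSym p (-3) = 1 := by
    rw [legendre_neg_three p hp2, legendre_three_mod' p h]
  have := (legendreSym.eq_one_iff p h0).mp h1
  simpa using this

private lemma qb (q : ℕ) [Fact q.Prime] (h4 : q % 4 = 1) (h3 : q % 3 = 2) :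
    legendreSym q 3 = -1 := by
  have hq2 : q ≠ 2 := by rintro rfl; norm_num at h4
  rw [legendre_h3 q hq2, ZMod.neg_one_pow_div_two_of_one_mod_four h4,
    legendre_three_mod q h3, one_mul]

private lemma qb' (q : ℕ) [Fact q.Prime] (h4 : q % 4 = 3) (h3 : q % 3 = 1) :
    legendreSym q 3 = -1 := by
  have hq2 : q ≠ 2 := by rintro rfl; norm_num at h4
  rw [legendre_h3 q hq2, ZMod.neg_one_pow_div_two_of_three_mod_four h4,
    legendre_three_mod' q h3, mul_one]

private lemma desc (q : ℕ) [hq : Fact q.Prime] {D : ℤ} (hD : legendreSym q D = -1) :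
    ∀ N : ℕ, ∀ x y : ℤ, (x^2 - D*y^2).natAbs = N → x^2 - D*y^2 ≠ 0 →
      Even (padicValNat q N) := by
  intro N
  induction N using Nat.strong_induction_on with
  | _ N ih =>
    intro x y hN h0
    by_cases hdvd : (q : ℤ) ∣ x^2 - D*y^2
    · obtain ⟨hx, hy⟩ := legendreSym.prime_dvd_of_eq_neg_one hD hdvd
      obtain ⟨x₁, rfl⟩ := hx
      obtain ⟨y₁, rfl⟩ := hy
      have key : ((q:ℤ)*x₁)^2 - D*((q:ℤ)*y₁)^2 = (q:ℤ)^2 * (x₁^2 - D*y₁^2) := by ring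
      have h0' : x₁^2 - D*y₁^2 ≠ 0 := by
        intro hzero
        rw [key, hzero, mul_zero] at h0
        exact h0 rfl
      set m := (x₁^2 - D*y₁^2).natAbs with hm
      have hm0 : m ≠ 0 := Int.natAbs_ne_zero.mpr h0'
      have hNeq : N = q^2 * m := by
        rw [← hN, key, Int.natAbs_mul, Int.natAbs_pow]
        rfl
      have hq1 : 2 ≤ q := hq.out.two_le
      have hq4 : 4 ≤ q^2 := by nlinarith
      have hlt : m < N := by
        calc m < 4 * m := by omega
        _ ≤ q^2 * m := Nat.mul_le_mul_right m hq4
        _ = N := hNeq.symm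
      have hev := ih m hlt x₁ y₁ rfl h0'
      rw [hNeq, padicValNat.mul (by positivity) hm0, padicValNat.prime_pow]
      exact even_two.add hev
    · have hnd : ¬ q ∣ N := by
        rw [← hN]
        intro hc
        exact hdvd (Int.natAbs_dvd_natAbs.mp (by simpa using hc))
      rw [padicValNat.eq_zero_of_not_dvd hnd]
      exact Even.zero

private lemma thue (p : ℕ) [hp : Fact p.Prime] (hmod : p % 3 = 1) :
    ∃ a b : ℤ, (p : ℤ) = a^2 + 3*b^2 := by
  have hp2 : p ≠ 2 := by rintro rfl; norm_num at hmod
  have hodd : p % 2 = 1 := Nat.Prime.eq_two_or_odd (Fact.out) |>.resolve_left hp2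
  obtain ⟨c, hc⟩ := qa' p hmod
  set r := Nat.sqrt p with hr
  have hrp : r^2 < p := by
    rcases Nat.lt_or_ge (r^2) p with h | h
    · exact h
    · exfalso
      have h1 : r^2 ≤ p := Nat.sqrt_le' p
      have h2 : r^2 = p := le_antisymm h1 h
      have hdvd : r ∣ p := ⟨r, by rw [← h2]; ring⟩
      rcases (Nat.Prime.eq_one_or_self_of_dvd Fact.out r hdvd) with h3 | h3
      · rw [h3] at h2; simp at h2
        exact Nat.Prime.one_lt (Fact.out (p := p.Prime)) |>.ne' h2.symm
      · rw [h3, pow_two] at h2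
        nlinarith [Nat.Prime.two_le (Fact.out (p := p.Prime))]
  haveI : NeZero p := ⟨hp.out.ne_zero⟩
  have hmap : ∀ ij ∈ (range (r+1)) ×ˢ (range (r+1)),
      ((ij.1 : ZMod p) * c - (ij.2 : ZMod p)) ∈ (univ : Finset (ZMod p)) := by
    intro _ _; exact mem_univ _
  have hcard' : (univ : Finset (ZMod p)).card < ((range (r+1)) ×ˢ (range (r+1))).card := by
    rw [card_univ, ZMod.card, card_product, card_range]
    have := Nat.lt_succ_sqrt' p
    simpa [pow_two] using this
  obtain ⟨⟨i₁, j₁⟩, hm1, ⟨i₂, j₂⟩, hm2, hne, heq⟩ :=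
    Finset.exists_ne_map_eq_of_card_lt_of_maps_to hcard' hmap
  simp only [mem_product, mem_range] at hm1 hm2
  simp only at heq
  have hab : ((j₁ : ZMod p) - j₂) = ((i₁ : ZMod p) - i₂) * c := by linear_combination -heq
  have hz : ((j₁ : ZMod p) - j₂)^2 + 3*((i₁ : ZMod p) - i₂)^2 = 0 := by
    rw [hab]
    linear_combination (-(((i₁:ZMod p)-i₂)^2))*hc
  have hdvd : (p : ℤ) ∣ ((j₁:ℤ)-j₂)^2 + 3*((i₁:ℤ)-i₂)^2 := by
    rw [← ZMod.intCast_zmod_eq_zero_iff_dvd]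
    push_cast
    linear_combination hz
  set a : ℤ := (j₁ : ℤ) - (j₂ : ℤ) with ha
  set b : ℤ := (i₁ : ℤ) - (i₂ : ℤ) with hb
  have hb2 : b^2 ≤ (r:ℤ)^2 := by
    have h1 : (i₁ : ℤ) ≤ r := by exact_mod_cast Nat.lt_succ_iff.mp hm1.1
    have h2 : (i₂ : ℤ) ≤ r := by exact_mod_cast Nat.lt_succ_iff.mp hm2.1
    have h3 : (0:ℤ) ≤ i₁ := Int.natCast_nonneg _
    have h4 : (0:ℤ) ≤ i₂ := Int.natCast_nonneg _
    nlinarith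
  have ha2 : a^2 ≤ (r:ℤ)^2 := by
    have h1 : (j₁ : ℤ) ≤ r := by exact_mod_cast Nat.lt_succ_iff.mp hm1.2
    have h2 : (j₂ : ℤ) ≤ r := by exact_mod_cast Nat.lt_succ_iff.mp hm2.2
    have h3 : (0:ℤ) ≤ j₁ := Int.natCast_nonneg _
    have h4 : (0:ℤ) ≤ j₂ := Int.natCast_nonneg _
    nlinarith
  have hrp' : (r:ℤ)^2 < p := by exact_mod_cast hrp
  have hub : a^2 + 3*b^2 < 4*p := by nlinarith
  have hpos : 0 < a^2 + 3*b^2 := by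
    rcases eq_or_ne b 0 with hb0 | hb0
    · have ha0 : a ≠ 0 := by
        intro ha0
        apply hne
        have e1 : i₁ = i₂ := by omega
        have e2 : j₁ = j₂ := by omega
        simp_all
      positivity
    · positivity
  obtain ⟨k, hk⟩ := hdvd
  have hppos : (0:ℤ) < p := by exact_mod_cast hp.out.pos
  have hk0 : 0 < k := by
    have h1 : (p:ℤ) * 0 < (p:ℤ) * k := by linarith
    exact lt_of_mul_lt_mul_left h1 (le_of_lt hppos)
  have hk4 : k < 4 := by
    have h1 : (p:ℤ) * k < (p:ℤ) * 4 := by linarith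
    exact lt_of_mul_lt_mul_left h1 (le_of_lt hppos)
  have hk123 : k = 1 ∨ k = 2 ∨ k = 3 := by omega
  rcases hk123 with rfl | rfl | rfl
  · exact ⟨a, b, by linarith⟩
  · exfalso
    have hdec : ∀ A B : ZMod 4, A^2 + 3*B^2 ≠ 2 := by decide
    apply hdec (a : ZMod 4) (b : ZMod 4)
    have h4 : ((a^2 + 3*b^2 : ℤ) : ZMod 4) = (((p:ℤ) * 2 : ℤ) : ZMod 4) := by rw [hk]
    push_cast at h4
    rw [h4]
    have hp4 : ((p:ℕ) : ZMod 4) = ((p % 4 : ℕ) : ZMod 4) := (ZMod.natCast_mod p 4).symm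
    have hcases : p % 4 = 1 ∨ p % 4 = 3 := by omega
    rcases hcases with h | h <;> rw [hp4, h] <;> decide
  · have h3a : (3:ℤ) ∣ a := by
      have h1 : (3:ℤ) ∣ a^2 := ⟨p - b^2, by linarith⟩
      exact Int.Prime.dvd_pow' (by norm_num) h1
    obtain ⟨a₁, ha₁⟩ := h3a
    have hsq : a^2 = 9*a₁^2 := by rw [ha₁]; ring
    exact ⟨b, a₁, by linarith⟩

private def IsLo (N : ℤ) : Prop := ∃ m n : ℤ, N = m^2 - m*n + n^2

private lemma isLo_mul {M N : ℤ} (hM : IsLo M) (hN : IsLo N) : IsLo (M*N) := by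
  obtain ⟨a, b, rfl⟩ := hM
  obtain ⟨c, d, rfl⟩ := hN
  exact ⟨a*c - b*d, a*d + b*c - b*d, by ring⟩

private lemma loesch_exists :
    ∀ N : ℕ, (∀ q : ℕ, q.Prime → q % 3 = 2 → Even (padicValNat q N)) → IsLo (N : ℤ) := by
  intro N
  induction N using Nat.strong_induction_on with
  | _ N ih =>
    intro h
    rcases Nat.lt_or_ge N 2 with hN2 | hN2
    · interval_cases N
      · exact ⟨0, 0, by norm_num⟩
      · exact ⟨1, 0, by norm_num⟩
    have hN0 : N ≠ 0 := by omega
    have hN1 : N ≠ 1 := by omega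
    set p := N.minFac with hpdef
    have hp : p.Prime := N.minFac_prime hN1
    haveI : Fact p.Prime := ⟨hp⟩
    have hdvd : p ∣ N := N.minFac_dvd
    have hp2 : 2 ≤ p := hp.two_le
    have hmod3 : p % 3 = 0 ∨ p % 3 = 1 ∨ p % 3 = 2 := by omega
    rcases hmod3 with h0 | h1 | h2
    · -- p % 3 = 0 → p = 3
      have hp3 : p = 3 := by
        have : (3:ℕ) ∣ p := Nat.dvd_of_mod_eq_zero h0
        exact ((Nat.prime_dvd_prime_iff_eq (by norm_num) hp).mp this).symm
      obtain ⟨M, hM⟩ := hdvd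
      have hM0 : M ≠ 0 := by rintro rfl; simp at hM; exact hN0 hM
      have hMlt : M < N := by
        rw [hM]
        exact (Nat.lt_mul_iff_one_lt_left (Nat.pos_of_ne_zero hM0)).mpr (by omega)
      have hcond : ∀ q : ℕ, q.Prime → q % 3 = 2 → Even (padicValNat q M) := by
        intro q hq hq3
        haveI : Fact q.Prime := ⟨hq⟩
        have hqp : ¬ q ∣ p := by
          rw [hp3]; intro hc
          have := (Nat.prime_dvd_prime_iff_eq hq (by norm_num)).mp hc
          omega
        have := h q hq hq3
        rw [hM, padicValNat.mul (by omega) hM0, padicValNat.eq_zero_of_not_dvd hqp] at this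
        simpa using this
      have hMlo := ih M hMlt hcond
      have : (N:ℤ) = (p:ℤ) * M := by exact_mod_cast congrArg (Nat.cast : ℕ → ℤ) hM
      rw [this, hp3]
      exact isLo_mul ⟨2, 1, by norm_num⟩ hMlo
    · -- p % 3 = 1 → Thue
      obtain ⟨a, b, hab⟩ := thue p h1
      obtain ⟨M, hM⟩ := hdvd
      have hM0 : M ≠ 0 := by rintro rfl; simp at hM; exact hN0 hM
      have hMlt : M < N := by
        rw [hM]
        exact (Nat.lt_mul_iff_one_lt_left (Nat.pos_of_ne_zero hM0)).mpr (by omega)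
      have hcond : ∀ q : ℕ, q.Prime → q % 3 = 2 → Even (padicValNat q M) := by
        intro q hq hq3
        haveI : Fact q.Prime := ⟨hq⟩
        have hqp : ¬ q ∣ p := by
          intro hc
          have := (Nat.prime_dvd_prime_iff_eq hq hp).mp hc
          omega
        have := h q hq hq3
        rw [hM, padicValNat.mul (by omega) hM0, padicValNat.eq_zero_of_not_dvd hqp] at this
        simpa using this
      have hMlo := ih M hMlt hcond
      have hcast : (N:ℤ) = (p:ℤ) * M := by exact_mod_cast congrArg (Nat.cast : ℕ → ℤ) hM
      rw [hcast]
      exact isLo_mul ⟨a + b, 2*b, by rw [hab]; ring⟩ hMlo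
    · -- p % 3 = 2 : even exponent
      have hev := h p hp h2
      have h1le : 1 ≤ padicValNat p N := one_le_padicValNat_of_dvd (by omega) hdvd
      have h2le : 2 ≤ padicValNat p N := by
        rcases hev with ⟨k, hk⟩; omega
      have hdvd2 : p^2 ∣ N := dvd_trans (pow_dvd_pow p h2le) pow_padicValNat_dvd
      obtain ⟨M, hM⟩ := hdvd2
      have hM0 : M ≠ 0 := by rintro rfl; simp at hM; exact hN0 hM
      have hp21 : 1 < p^2 := by nlinarith
      have hMlt : M < N := by
        rw [hM]
        exact (Nat.lt_mul_iff_one_lt_left (Nat.pos_of_ne_zero hM0)).mpr hp21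
      have hcond : ∀ q : ℕ, q.Prime → q % 3 = 2 → Even (padicValNat q M) := by
        intro q hq hq3
        haveI : Fact q.Prime := ⟨hq⟩
        have hqq := h q hq hq3
        rcases eq_or_ne q p with rfl | hne
        · rw [hM, padicValNat.mul (by positivity) hM0, padicValNat.prime_pow] at hqq
          rcases hqq with ⟨k, hk⟩
          exact ⟨k - 1, by omega⟩
        · have hqp : ¬ q ∣ p^2 := by
            intro hc
            exact hne ((Nat.prime_dvd_prime_iff_eq hq hp).mp (hq.dvd_of_dvd_pow hc))
          rw [hM, padicValNat.mul (by positivity) hM0, padicValNat.eq_zero_of_not_dvd hqp] at hqq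
          simpa using hqq
      have hMlo := ih M hMlt hcond
      have hcast : (N:ℤ) = ((p:ℤ))^2 * M := by exact_mod_cast congrArg (Nat.cast : ℕ → ℤ) hM
      rw [hcast]
      exact isLo_mul ⟨p, 0, by ring⟩ hMlo

private lemma two_dvd_of_c4 {a : ℤ} (h : (a : ZMod 4) = 0 ∨ (a : ZMod 4) = 2) : 2 ∣ a := by
  rcases h with h | h
  · have h4 : (4:ℤ) ∣ a := by exact_mod_cast (ZMod.intCast_zmod_eq_zero_iff_dvd a 4).mp h
    exact dvd_trans (by norm_num) h4
  · have h2 : ((a - 2 : ℤ) : ZMod 4) = 0 := by push_cast; rw [h]; ring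
    have h4 : (4:ℤ) ∣ a - 2 := by exact_mod_cast (ZMod.intCast_zmod_eq_zero_iff_dvd _ 4).mp h2
    obtain ⟨k, hk⟩ := h4
    exact ⟨2*k + 1, by linarith⟩

private lemma v2_odd :
    ∀ T : ℕ, ∀ a b x y t : ℤ, t.natAbs = T → 0 < t → t = a^2 + b^2 → t = 3*x^2 - y^2 →
      Odd (padicValNat 2 T) := by
  intro T
  induction T using Nat.strong_induction_on with
  | _ T ih =>
    intro a b x y t hT ht hab hxy
    by_cases h4 : (4:ℤ) ∣ t
    · have hz : ((t : ℤ) : ZMod 4) = 0 := by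
        rw [ZMod.intCast_zmod_eq_zero_iff_dvd]; exact_mod_cast h4
      have hab4 : ((a:ZMod 4))^2 + (b:ZMod 4)^2 = 0 := by
        have := hz; rw [hab] at this; push_cast at this; linear_combination this
      have hxy4 : 3*((x:ZMod 4))^2 - (y:ZMod 4)^2 = 0 := by
        have := hz; rw [hxy] at this; push_cast at this; linear_combination this
      have hd1 : ∀ A B : ZMod 4, A^2+B^2 = 0 → (A = 0 ∨ A = 2) ∧ (B = 0 ∨ B = 2) := by decide
      have hd2 : ∀ X Y : ZMod 4, 3*X^2 - Y^2 = 0 → (X = 0 ∨ X = 2) ∧ (Y = 0 ∨ Y = 2) := by decide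
      obtain ⟨ha2, hb2⟩ := hd1 _ _ hab4
      obtain ⟨hx2, hy2⟩ := hd2 _ _ hxy4
      obtain ⟨a₁, rfl⟩ := two_dvd_of_c4 ha2
      obtain ⟨b₁, rfl⟩ := two_dvd_of_c4 hb2
      obtain ⟨x₁, rfl⟩ := two_dvd_of_c4 hx2
      obtain ⟨y₁, rfl⟩ := two_dvd_of_c4 hy2
      set t' := a₁^2 + b₁^2 with ht'
      have htt' : t = 4*t' := by rw [hab]; ring
      have hxy' : t' = 3*x₁^2 - y₁^2 := by
        have : 4*t' = 4*(3*x₁^2 - y₁^2) := by rw [← htt', hxy]; ring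
        linarith
      have ht'pos : 0 < t' := by linarith
      have hT4 : T = 4 * t'.natAbs := by
        rw [← hT, htt', Int.natAbs_mul]; rfl
      have hlt : t'.natAbs < T := by
        have h1 : t'.natAbs ≠ 0 := Int.natAbs_ne_zero.mpr ht'pos.ne'
        omega
      have hodd := ih _ hlt a₁ b₁ x₁ y₁ t' rfl ht'pos rfl hxy'
      have h40 : (4:ℕ) = 2^2 := by norm_num
      rw [hT4, h40, padicValNat.mul (by norm_num) (by omega), padicValNat.prime_pow]
      rcases hodd with ⟨k, hk⟩
      exact ⟨k + 1, by omega⟩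
    · -- t ≡ 2 mod 4
      have hd3 : ∀ A B X Y : ZMod 4, A^2+B^2 = 3*X^2-Y^2 → A^2+B^2 = 0 ∨ A^2+B^2 = 2 := by decide
      have heq4 : ((a:ZMod 4))^2 + (b:ZMod 4)^2 = 3*((x:ZMod 4))^2 - (y:ZMod 4)^2 := by
        have h1 : ((a^2+b^2 : ℤ) : ZMod 4) = ((3*x^2 - y^2 : ℤ) : ZMod 4) := by
          rw [← hab, ← hxy]
        push_cast at h1
        linear_combination h1
      have ht4 : ((t:ℤ) : ZMod 4) = 0 ∨ ((t:ℤ) : ZMod 4) = 2 := by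
        have := hd3 _ _ _ _ heq4
        rcases this with h | h
        · left; rw [hab]; push_cast; linear_combination h
        · right; rw [hab]; push_cast; linear_combination h
      rcases ht4 with h | h
      · exact absurd (by exact_mod_cast (ZMod.intCast_zmod_eq_zero_iff_dvd t 4).mp h) h4
      · have h2 : ((t - 2 : ℤ) : ZMod 4) = 0 := by push_cast; rw [h]; ring
        have hdvd : (4:ℤ) ∣ t - 2 := by
          exact_mod_cast (ZMod.intCast_zmod_eq_zero_iff_dvd _ 4).mp h2
        obtain ⟨k, hk⟩ := hdvd
        have htk : t = 2*(2*k+1) := by linarith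
        have hk0 : 0 ≤ k := by nlinarith
        have hT2 : T = 2 * (2*k+1).natAbs := by rw [← hT, htk, Int.natAbs_mul]; rfl
        have hko : ¬ (2:ℕ) ∣ (2*k+1).natAbs := by
          intro hc
          have : (2:ℤ) ∣ 2*k+1 := by
            exact Int.natAbs_dvd_natAbs.mp (by simpa using hc)
          omega
        rw [hT2, padicValNat.mul (by norm_num) (by omega), padicValNat.eq_zero_of_not_dvd hko]
        simp [padicValNat.self]

private lemma lo_div3 {u m n : ℤ} (hu : u = m^2 - m*n + n^2) (h3 : (3:ℤ) ∣ u) :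
    ∃ m' n' : ℤ, u = 3*(m'^2 - m'*n' + n'^2) := by
  have h1 : (3:ℤ) ∣ (m+n)^2 := by
    obtain ⟨w, hw⟩ := h3
    exact ⟨w + m*n, by linear_combination hw - hu⟩
  have h2 : (3:ℤ) ∣ m + n := Int.Prime.dvd_pow' (by norm_num) h1
  obtain ⟨c, hc⟩ := h2
  refine ⟨m - c, c, ?_⟩
  have hn : n = 3*c - m := by linarith
  rw [hu, hn]; ring

private lemma v3_even :
    ∀ T : ℕ, ∀ x y m n t : ℤ, t.natAbs = T → 0 < t → t = 3*x^2 - y^2 →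
      t = 2*(m^2 - m*n + n^2) → Even (padicValNat 3 T) := by
  intro T
  induction T using Nat.strong_induction_on with
  | _ T ih =>
    intro x y m n t hT ht hxy hmn
    by_cases h3 : (3:ℤ) ∣ t
    · -- 3 ∣ y
      have hy3 : (3:ℤ) ∣ y := by
        have h1 : (3:ℤ) ∣ y^2 := by
          obtain ⟨w, hw⟩ := h3
          exact ⟨x^2 - w, by linear_combination hxy - hw⟩
        exact Int.Prime.dvd_pow' (by norm_num) h1
      obtain ⟨y₁, rfl⟩ := hy3
      -- 3 ∣ u
      have hu3 : (3:ℤ) ∣ m^2 - m*n + n^2 := by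
        have h1 : (3:ℤ) ∣ 2*(m^2 - m*n + n^2) := hmn ▸ h3
        rcases (Int.prime_three.2.2 _ _ h1) with h | h
        · norm_num at h
        · exact h
      obtain ⟨m₁, n₁, hu1⟩ := lo_div3 rfl hu3
      -- s := t/3
      set s := x^2 - 3*y₁^2 with hs
      have hts : t = 3*s := by rw [hxy]; ring
      have hs2 : s = 2*(m₁^2 - m₁*n₁ + n₁^2) := by
        have : 3*s = 3*(2*(m₁^2 - m₁*n₁ + n₁^2)) := by
          rw [← hts, hmn, hu1]; ring
        linarith
      -- claim 3 ∣ s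
      have hs3 : (3:ℤ) ∣ s := by
        by_contra hns
        have hcast : ((s:ℤ) : ZMod 3) ≠ 0 := by
          rw [Ne, ZMod.intCast_zmod_eq_zero_iff_dvd]; exact_mod_cast hns
        have h30 : ((3:ZMod 3)) = 0 := by decide
        have hsx : ((s:ℤ) : ZMod 3) = ((x : ZMod 3))^2 := by
          rw [hs]; push_cast
          linear_combination (-((y₁ : ZMod 3))^2) * h30
        have hdx : ∀ X : ZMod 3, X^2 = 0 ∨ X^2 = 1 := by decide
        have hdu : ∀ A B : ZMod 3, A^2 - A*B + B^2 = 0 ∨ A^2 - A*B + B^2 = 1 := by decide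
        have hs1' : ((s:ℤ) : ZMod 3) = 1 := by
          rcases hdx ((x : ZMod 3)) with h | h
          · rw [hsx, h] at hcast; exact absurd rfl hcast
          · rw [hsx, h]
        have hucast : ((m₁^2 - m₁*n₁ + n₁^2 : ℤ) : ZMod 3) = ((m₁:ZMod 3))^2 - (m₁:ZMod 3)*(n₁:ZMod 3) + ((n₁:ZMod 3))^2 := by
          push_cast; ring
        have hs2' : ((s:ℤ) : ZMod 3) = 2 * ((m₁^2 - m₁*n₁ + n₁^2 : ℤ) : ZMod 3) := by
          rw [hs2]; push_cast; ring
        rcases hdu ((m₁:ZMod 3)) ((n₁:ZMod 3)) with h | h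
        · rw [hucast, h, mul_zero] at hs2'
          exact hcast hs2'
        · rw [hucast, h] at hs2'
          rw [hs1'] at hs2'
          revert hs2'; decide
      obtain ⟨s₁, hs1⟩ := hs3
      -- 3 ∣ x
      have hx3 : (3:ℤ) ∣ x := by
        have h1 : (3:ℤ) ∣ x^2 := by
          exact ⟨s₁ + y₁^2, by linear_combination hs1 - hs⟩
        exact Int.Prime.dvd_pow' (by norm_num) h1
      obtain ⟨x₁, rfl⟩ := hx3
      -- u' divisible by 3 again
      have hu'3 : (3:ℤ) ∣ m₁^2 - m₁*n₁ + n₁^2 := by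
        have h1 : (3:ℤ) ∣ 2*(m₁^2 - m₁*n₁ + n₁^2) := by rw [← hs2, hs1]; exact ⟨s₁, rfl⟩
        rcases (Int.prime_three.2.2 _ _ h1) with h | h
        · norm_num at h
        · exact h
      obtain ⟨m₂, n₂, hu2⟩ := lo_div3 rfl hu'3
      set t' := 3*x₁^2 - y₁^2 with ht'
      have htt' : t = 9*t' := by rw [hts, hs]; ring
      have ht'pos : 0 < t' := by linarith
      have hmn' : t' = 2*(m₂^2 - m₂*n₂ + n₂^2) := by
        have h9 : 9*t' = 9*(2*(m₂^2 - m₂*n₂ + n₂^2)) := by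
          rw [← htt', hmn, hu1, hu2]; ring
        linarith
      have hT9 : T = 9 * t'.natAbs := by rw [← hT, htt', Int.natAbs_mul]; rfl
      have hlt : t'.natAbs < T := by
        have h1 : t'.natAbs ≠ 0 := Int.natAbs_ne_zero.mpr ht'pos.ne'
        omega
      have hev := ih _ hlt x₁ y₁ m₂ n₂ t' rfl ht'pos rfl hmn'
      have h90 : (9:ℕ) = 3^2 := by norm_num
      rw [hT9, h90, padicValNat.mul (by norm_num) (by omega), padicValNat.prime_pow]
      rcases hev with ⟨k, hk⟩
      exact ⟨k + 1, by omega⟩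
    · have hnd : ¬ (3:ℕ) ∣ T := by
        intro hc
        rw [← hT] at hc
        exact h3 (Int.natAbs_dvd_natAbs.mp (by simpa using hc))
      rw [padicValNat.eq_zero_of_not_dvd hnd]
      exact Even.zero

/-- An integer of the form `3x² - y²` is a sum of two squares iff it equals
`2(m² - mn + n²)` for some integers `m, n`. -/
theorem sum_two_squares_iff_twice_eisenstein (t x y : ℤ)
    (h : t = 3 * x ^ 2 - y ^ 2) :
    (∃ a b : ℤ, t = a ^ 2 + b ^ 2) ↔
    (∃ m n : ℤ, t = 2 * (m ^ 2 - m * n + n ^ 2)) := by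
  rcases lt_trichotomy t 0 with hneg | rfl | hpos
  · constructor
    · rintro ⟨a, b, rfl⟩
      exfalso; nlinarith [sq_nonneg a, sq_nonneg b]
    · rintro ⟨m, n, hmn⟩
      exfalso; nlinarith [sq_nonneg (2*m - n), sq_nonneg n]
  · constructor
    · intro _; exact ⟨0, 0, by ring⟩
    · intro _; exact ⟨0, 0, by ring⟩
  · set T := t.natAbs with hTdef
    have hTt : (T:ℤ) = t := Int.natAbs_of_nonneg hpos.le
    have hT0 : T ≠ 0 := Int.natAbs_ne_zero.mpr hpos.ne'
    have hyx : (y^2 - 3*x^2).natAbs = T := by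
      rw [show y^2 - 3*x^2 = -t by linarith, Int.natAbs_neg]
    have hyx0 : y^2 - 3*x^2 ≠ 0 := by intro hc; nlinarith
    constructor
    · rintro ⟨a, b, hab⟩
      have hv2 : Odd (padicValNat 2 T) := v2_odd T a b x y t rfl hpos hab h
      have h2T : 2 ∣ T := by
        rcases hv2 with ⟨k, hk⟩
        exact dvd_of_one_le_padicValNat (by omega)
      obtain ⟨L, hL⟩ := h2T
      have hL0 : L ≠ 0 := by rintro rfl; simp at hL; exact hT0 hL
      -- ℕ sum of two squares for T
      have hTnat : ∃ A B : ℕ, T = A^2 + B^2 := by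
        refine ⟨a.natAbs, b.natAbs, ?_⟩
        have : (T:ℤ) = (a.natAbs:ℤ)^2 + (b.natAbs:ℤ)^2 := by
          rw [hTt, hab]
          push_cast [Int.natAbs_sq]
          rw [sq_abs, sq_abs]
        exact_mod_cast this
      have hcond : ∀ q : ℕ, q.Prime → q % 3 = 2 → Even (padicValNat q L) := by
        intro q hqp hq3
        haveI : Fact q.Prime := ⟨hqp⟩
        rcases eq_or_ne q 2 with rfl | hq2
        · have : padicValNat 2 T = 1 + padicValNat 2 L := by
            rw [hL, padicValNat.mul (by norm_num) hL0, padicValNat.self one_lt_two]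
          rcases hv2 with ⟨k, hk⟩
          exact ⟨k, by omega⟩
        · have hqodd : q % 2 = 1 := hqp.eq_two_or_odd.resolve_left hq2
          have hq2' : ¬ q ∣ 2 := fun hd => hq2 ((Nat.prime_dvd_prime_iff_eq hqp Nat.prime_two).mp hd)
          have hTL : padicValNat q T = padicValNat q L := by
            rw [hL, padicValNat.mul (by norm_num) hL0,
              padicValNat.eq_zero_of_not_dvd hq2', zero_add]
          have hEvenT : Even (padicValNat q T) := by
            have hq4 : q % 4 = 1 ∨ q % 4 = 3 := by omega
            rcases hq4 with h4 | h4
            · exact desc q (qb q h4 hq3) T y x hyx hyx0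
            · by_cases hqT : q ∣ T
              · exact Nat.eq_sq_add_sq_iff.mp hTnat q (Nat.mem_primeFactors.mpr ⟨hqp, hqT, hT0⟩) h4
              · rw [padicValNat.eq_zero_of_not_dvd hqT]; exact Even.zero
          rwa [hTL] at hEvenT
      have hLo : ∃ m' n' : ℤ, (L:ℤ) = m'^2 - m'*n' + n'^2 := loesch_exists L hcond
      obtain ⟨mm, nn, hmn⟩ := hLo
      refine ⟨mm, nn, ?_⟩
      have : (T:ℤ) = 2 * (L:ℤ) := by exact_mod_cast congrArg (Nat.cast : ℕ → ℤ) hL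
      rw [← hTt, this, hmn]
    · rintro ⟨m, n, hmn⟩
      have hcond : ∀ {q : ℕ}, q.Prime → q % 4 = 3 → Even (padicValNat q T) := by
        intro q hqp hq4
        haveI : Fact q.Prime := ⟨hqp⟩
        have hq2 : q ≠ 2 := by omega
        rcases eq_or_ne q 3 with rfl | hq3
        · exact v3_even T x y m n t rfl hpos h hmn
        · have hq30 : q % 3 = 1 ∨ q % 3 = 2 := by
            rcases Nat.lt_or_ge (q % 3) 1 with h1 | h1
            · exfalso
              have : (3:ℕ) ∣ q := Nat.dvd_of_mod_eq_zero (by omega)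
              exact hq3 ((Nat.prime_dvd_prime_iff_eq (by norm_num) hqp).mp this).symm
            · omega
          rcases hq30 with h31 | h32
          · exact desc q (qb' q hq4 h31) T y x hyx hyx0
          · -- use 4u = (2m-n)^2 + 3n^2 = 2t
            have h2t : (2*m - n)^2 - (-3)*n^2 = 2*t := by rw [hmn]; ring
            have hval : ((2*m - n)^2 - (-3)*n^2).natAbs = 2 * T := by
              rw [h2t, Int.natAbs_mul, ← hTdef]
              rfl
            have hval0 : (2*m - n)^2 - (-3)*n^2 ≠ 0 := by
              rw [h2t]; omega
            have hEv := desc q (qa q hq2 h32) (2*T) (2*m - n) n hval hval0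
            have hq2' : ¬ q ∣ 2 := fun hd => hq2 ((Nat.prime_dvd_prime_iff_eq hqp Nat.prime_two).mp hd)
            rw [padicValNat.mul (by norm_num) hT0,
              padicValNat.eq_zero_of_not_dvd hq2', zero_add] at hEv
            exact hEv
      obtain ⟨A, B, hAB⟩ := (Nat.eq_sq_add_sq_iff (n := T)).mpr (fun q hq h4 => hcond (Nat.prime_of_mem_primeFactors hq) h4)
      refine ⟨(A:ℤ), (B:ℤ), ?_⟩
      rw [← hTt]
      exact_mod_cast congrArg (Nat.cast : ℕ → ℤ) hAB
end

section
/- There exists a regular tetrahedron with all four vertices in ℤ³ and side length l > 0 if and only if l = m√2 for some positive integer m. -/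
/-!
The three edge vectors `p, q, r` from one vertex have a common squared length `N` and, by
polarization, pairwise dot products `k` with `N = 2k`. So their Gram matrix is `k (I + J)` and
`det(p, q, r)² = det(k (I + J)) = 4k³`. Since `ℤ` is integrally closed, `4k³` being a square
forces `k = u²`, whence `l² = 2u²`. Conversely `(0,0,0), (m,m,0), (m,0,m), (0,m,m)` is a regular
tetrahedron of edge `m√2`.
-/

open Matrix

section

variable {R : Type*} [CommRing R]

theorem two_mul_dotProduct_eq_of_equilateral {ι : Type*} [Fintype ι] {u v : ι → R} {N : R}
    (hu : u ⬝ᵥ u = N) (hv : v ⬝ᵥ v = N) (huv : (v - u) ⬝ᵥ (v - u) = N) :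
    2 * (u ⬝ᵥ v) = N := by
  simp only [sub_dotProduct, dotProduct_sub, dotProduct_comm v u] at huv
  linear_combination hu + hv - huv

theorem det_sq_of_mul_transpose_eq {ι : Type*} [Fintype ι] [DecidableEq ι]
    {M : Matrix ι ι R} {k : R} (hM : M * Mᵀ = k • (1 + of fun _ _ => 1)) :
    M.det ^ 2 = (Fintype.card ι + 1) * k ^ Fintype.card ι := by
  have hJ : (of fun _ _ => 1 : Matrix ι ι R) = vecMulVec 1 1 := by
    ext; simp [vecMulVec_apply]
  calc M.det ^ 2 = (M * Mᵀ).det := by rw [det_mul, det_transpose, sq]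
    _ = _ := by
      rw [hM, det_smul, hJ, vecMulVec_eq Unit, det_one_add_replicateCol_mul_replicateRow]
      simp [add_comm, mul_comm]

def toVec (A : R × R × R) : Fin 3 → R := ![A.1, A.2.1, A.2.2]

theorem dotProduct_self_toVec_sub (A B : R × R × R) :
    (toVec A - toVec B) ⬝ᵥ (toVec A - toVec B) =
      (A.1 - B.1) ^ 2 + (A.2.1 - B.2.1) ^ 2 + (A.2.2 - B.2.2) ^ 2 := by
  simp [toVec, dotProduct, Fin.sum_univ_three, sq]

variable [IsDomain R] [IsIntegrallyClosed R]

theorem isSquare_of_sq_eq_four_mul_pow_three (h2 : (2 : R) ≠ 0) {d k : R}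
    (h : d ^ 2 = 4 * k ^ 3) : IsSquare k := by
  rcases eq_or_ne k 0 with rfl | hk
  · exact ⟨0, by ring⟩
  obtain ⟨t, rfl⟩ : 2 * k ∣ d := by
    rw [← IsIntegrallyClosed.pow_dvd_pow_iff two_ne_zero, h]
    exact ⟨k, by ring⟩
  refine ⟨t, mul_left_cancel₀ (pow_ne_zero 2 (mul_ne_zero h2 hk)) ?_⟩
  linear_combination -h

theorem exists_eq_two_mul_sq_of_regular_tetrahedron (h2 : (2 : R) ≠ 0)
    {a b c d : Fin 3 → R} {N : R}
    (hab : (a - b) ⬝ᵥ (a - b) = N) (hac : (a - c) ⬝ᵥ (a - c) = N)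
    (had : (a - d) ⬝ᵥ (a - d) = N) (hbc : (b - c) ⬝ᵥ (b - c) = N)
    (hbd : (b - d) ⬝ᵥ (b - d) = N) (hcd : (c - d) ⬝ᵥ (c - d) = N) :
    ∃ u : R, N = 2 * u ^ 2 := by
  have edge_dot {x y : Fin 3 → R} (hx : (a - x) ⬝ᵥ (a - x) = N)
      (hy : (a - y) ⬝ᵥ (a - y) = N) (hxy : (x - y) ⬝ᵥ (x - y) = N) :
      2 * ((a - x) ⬝ᵥ (a - y)) = N :=
    two_mul_dotProduct_eq_of_equilateral hx hy (by rwa [sub_sub_sub_cancel_left])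
  set k := (a - b) ⬝ᵥ (a - c)
  have hk : 2 * k = N := edge_dot hab hac hbc
  have hbd_dot : (a - b) ⬝ᵥ (a - d) = k :=
    mul_left_cancel₀ h2 ((edge_dot hab had hbd).trans hk.symm)
  have hcd_dot : (a - c) ⬝ᵥ (a - d) = k :=
    mul_left_cancel₀ h2 ((edge_dot hac had hcd).trans hk.symm)
  let edges : Fin 3 → Fin 3 → R := ![a - b, a - c, a - d]
  let M : Matrix (Fin 3) (Fin 3) R := of edges
  have hM : M * Mᵀ = k • (1 + of fun _ _ => 1) := by
    ext i j
    rw [show (M * Mᵀ) i j = edges i ⬝ᵥ edges j from mul_apply']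
    fin_cases i <;> fin_cases j <;>
      simp [edges, hab, hac, had, hbd_dot, hcd_dot, ← hk, dotProduct_comm _ (a - b),
        dotProduct_comm (a - d), -sub_dotProduct, -dotProduct_sub] <;> ring
  obtain ⟨u, hu⟩ : IsSquare k := by
    refine isSquare_of_sq_eq_four_mul_pow_three h2 (d := M.det) ?_
    rw [det_sq_of_mul_transpose_eq hM]
    norm_num
  exact ⟨u, by rw [← hk, hu, sq]⟩

end

/-- A regular tetrahedron with vertices in `ℤ³` and edge length `l > 0`
exists iff `l = m√2` for some positive integer `m`. -/
theorem regular_tetrahedron_side_characterization (l : ℝ) (hl : 0 < l) :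
    (∃ A B C D : ℤ × ℤ × ℤ, A ≠ B ∧ A ≠ C ∧ A ≠ D ∧ B ≠ C ∧ B ≠ D ∧ C ≠ D ∧
      (((A.1 - B.1) ^ 2 + (A.2.1 - B.2.1) ^ 2 + (A.2.2 - B.2.2) ^ 2 : ℤ) : ℝ) = l ^ 2 ∧
      (((A.1 - C.1) ^ 2 + (A.2.1 - C.2.1) ^ 2 + (A.2.2 - C.2.2) ^ 2 : ℤ) : ℝ) = l ^ 2 ∧
      (((A.1 - D.1) ^ 2 + (A.2.1 - D.2.1) ^ 2 + (A.2.2 - D.2.2) ^ 2 : ℤ) : ℝ) = l ^ 2 ∧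
      (((B.1 - C.1) ^ 2 + (B.2.1 - C.2.1) ^ 2 + (B.2.2 - C.2.2) ^ 2 : ℤ) : ℝ) = l ^ 2 ∧
      (((B.1 - D.1) ^ 2 + (B.2.1 - D.2.1) ^ 2 + (B.2.2 - D.2.2) ^ 2 : ℤ) : ℝ) = l ^ 2 ∧
      (((C.1 - D.1) ^ 2 + (C.2.1 - D.2.1) ^ 2 + (C.2.2 - D.2.2) ^ 2 : ℤ) : ℝ) = l ^ 2) ↔
    (∃ m : ℕ, 0 < m ∧ l = (m : ℝ) * Real.sqrt 2) := by
  constructor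
  · rintro ⟨A, B, C, D, -, -, -, -, -, -, hAB, hAC, hAD, hBC, hBD, hCD⟩
    simp only [← dotProduct_self_toVec_sub] at hAB hAC hAD hBC hBD hCD
    obtain ⟨u, hu⟩ := exists_eq_two_mul_sq_of_regular_tetrahedron two_ne_zero rfl
      (Int.cast_injective (hAC.trans hAB.symm)) (Int.cast_injective (hAD.trans hAB.symm))
      (Int.cast_injective (hBC.trans hAB.symm)) (Int.cast_injective (hBD.trans hAB.symm))
      (Int.cast_injective (hCD.trans hAB.symm))
    have hlu : l = u.natAbs * √2 := by
      rw [← Real.sqrt_sq hl.le, ← hAB, hu, Int.cast_mul, Int.cast_pow, Int.cast_ofNat,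
        Real.sqrt_mul' _ (sq_nonneg _), Real.sqrt_sq_eq_abs, mul_comm, Nat.cast_natAbs,
        Int.cast_abs]
    refine ⟨u.natAbs, Nat.pos_of_ne_zero fun hu0 => ?_, hlu⟩
    simp only [hu0, Nat.cast_zero, zero_mul] at hlu
    exact hl.ne' hlu
  · rintro ⟨m, hm, rfl⟩
    refine ⟨(0, 0, 0), (m, m, 0), (m, 0, m), (0, m, m), ?_⟩
    simp [hm.ne', eq_comm (a := (0 : ℤ)), mul_pow]
    ring
end

section
/- Let a, b, c, d be integers with a² + b² + c² = 3d² and gcd(a,b,c) = 1. Then there exist integers r, s with 2(a² + b²) = s² + 3r². -/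
/-- multiplicativity of the form x^2+3y^2 -/
lemma form_mul (x y u v : ℤ) :
    (x^2+3*y^2) * (u^2+3*v^2) = (x*u+3*y*v)^2 + 3*(x*v-y*u)^2 := by ring

/-- centered residue -/
lemma centered (q : ℕ) (hq : q % 2 = 1) (hq1 : 1 < q) (x : ℤ) :
    ∃ u : ℤ, (q:ℤ) ∣ (x - u) ∧ 2 * u.natAbs < q := by
  set r := x % (q:ℤ) with hr
  have hq0 : (0:ℤ) < q := by exact_mod_cast Nat.lt_of_lt_of_le Nat.zero_lt_one hq1.le
  have h0 : 0 ≤ r := Int.emod_nonneg x (by positivity)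
  have h1 : r < q := Int.emod_lt_of_pos x hq0
  have hdvd : (q:ℤ) ∣ (x - r) := Int.dvd_self_sub_of_emod_eq rfl
  by_cases hc : 2 * r < q
  · refine ⟨r, hdvd, ?_⟩
    have : r.natAbs = r.toNat := by omega
    omega
  · refine ⟨r - q, by rw [show x - (r - (q:ℤ)) = (x - r) + q by ring]; exact dvd_add hdvd dvd_rfl , ?_⟩
    have hodd : (q:ℤ) % 2 = 1 := by omega
    have : (r - q).natAbs = (q - r).toNat := by omega
    omega

set_option maxHeartbeats 1000000 in
/-- Euler's descent for the form x² + 3y². -/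
lemma descent (p : ℕ) (hp : p.Prime) (hpodd : p % 2 = 1) :
    ∀ k : ℕ, 0 < k → k < p → (∃ x y : ℤ, x^2 + 3*y^2 = (k:ℤ) * p) →
      ∃ x y : ℤ, x^2 + 3*y^2 = (p:ℤ) := by
  intro k
  induction k using Nat.strong_induction_on with
  | _ k ih =>
  intro hk0 hkp ⟨x, y, hxy⟩
  rcases eq_or_lt_of_le (show 1 ≤ k from hk0) with hk1 | hk2
  · exact ⟨x, y, by rw [hxy, ← hk1]; push_cast; ring⟩
  -- k ≥ 2
  by_cases hke : 2 ∣ k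
  · -- even case: show 4 ∣ k and find a representation of (k/4) * p
    have hcop4 : Nat.Coprime 4 p := by
      have h2p : Nat.Coprime 2 p := (Nat.coprime_primes Nat.prime_two hp).mpr (by omega)
      simpa using Nat.Coprime.mul h2p h2p
    have key : ∃ X Y : ℤ, 4 * (X^2 + 3*Y^2) = (k:ℤ) * p := by
      have h2dvd : (2:ℤ) ∣ x^2 + 3*y^2 := by
        rw [hxy]
        obtain ⟨j, rfl⟩ := hke
        push_cast
        exact ⟨j * p, by ring⟩
      rcases Int.even_or_odd x with ⟨m, hm⟩ | ⟨m, hm⟩ <;>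
        rcases Int.even_or_odd y with ⟨n, hn⟩ | ⟨n, hn⟩
      · exact ⟨m, n, by rw [← hxy, hm, hn]; ring⟩
      · exfalso
        obtain ⟨t, ht⟩ := h2dvd
        rw [hm, hn] at ht
        have ht' : 4*(m*m) + 12*(n*n) + 12*n + 3 = 2*t := by linear_combination ht
        omega
      · exfalso
        obtain ⟨t, ht⟩ := h2dvd
        rw [hm, hn] at ht
        have ht' : 4*(m*m) + 4*m + 12*(n*n) + 1 = 2*t := by linear_combination ht
        omega
      · -- both odd
        set e : ℤ := if (4:ℤ) ∣ (x - y) then 1 else -1 with he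
        have he2 : e^2 = 1 := by
          rw [he]; split <;> ring
        have h4dvd : (4:ℤ) ∣ (x - e*y) := by
          rw [he]
          split_ifs with h4
          · rw [one_mul]; exact h4
          · rw [show x - (-1)*y = x + y by ring, hm, hn]
            rw [hm, hn] at h4
            omega
        obtain ⟨Y, hY⟩ := h4dvd
        have hxe : x = 4*Y + e*y := by linarith [hY]
        refine ⟨Y + e*y, Y, ?_⟩
        rw [← hxy, hxe]
        linear_combination (3*y^2) * he2
    obtain ⟨X, Y, hXY⟩ := key
    have h4kp : (4:ℕ) ∣ k * p := by
      have h4 : ((4:ℕ):ℤ) ∣ ((k * p : ℕ):ℤ) := by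
        push_cast
        exact ⟨X^2+3*Y^2, by rw [← hXY]⟩
      exact_mod_cast h4
    have h4k : 4 ∣ k := hcop4.dvd_of_dvd_mul_right h4kp
    obtain ⟨j, rfl⟩ := h4k
    have hj : X^2 + 3*Y^2 = (j:ℤ) * p := by
      have h4 : (4:ℤ) * (X^2+3*Y^2) = 4 * ((j:ℤ) * p) := by
        rw [hXY]; push_cast; ring
      exact mul_left_cancel₀ (by norm_num) h4
    exact ih j (by omega) (by omega) (by omega) ⟨X, Y, hj⟩
  · -- odd case
    have hk1 : k ≠ 1 := by omega
    set q := k.minFac with hqdef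
    have hqp : q.Prime := Nat.minFac_prime hk1
    have hqk : q ∣ k := Nat.minFac_dvd k
    have hqle : q ≤ k := Nat.minFac_le hk0
    have hqodd : q % 2 = 1 := by
      rcases Nat.Prime.eq_two_or_odd hqp with h | h
      · exact absurd (h ▸ hqk) hke
      · exact h
    have hq1 : 1 < q := hqp.one_lt
    have hq3 : 3 ≤ q := by omega
    have hq0' : (0:ℤ) < q := by exact_mod_cast (by omega : 0 < q)
    obtain ⟨u, hu1, hu2⟩ := centered q hqodd hq1 x
    obtain ⟨v, hv1, hv2⟩ := centered q hqodd hq1 y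
    have hqxy : (q:ℤ) ∣ x^2 + 3*y^2 := by
      rw [hxy]
      obtain ⟨j, hj⟩ := hqk
      rw [hj]
      push_cast
      exact ⟨j * p, by ring⟩
    have hquv : (q:ℤ) ∣ u^2 + 3*v^2 := by
      have hdiff : (q:ℤ) ∣ (x^2+3*y^2) - (u^2+3*v^2) := by
        rw [show (x^2+3*y^2) - (u^2+3*v^2) = (x-u)*(x+u) + 3*((y-v)*(y+v)) by ring]
        exact dvd_add (hu1.mul_right _) ((hv1.mul_right _).mul_left 3)
      have h2 := dvd_sub hqxy hdiff
      rw [show (x^2+3*y^2) - ((x^2+3*y^2) - (u^2+3*v^2)) = u^2+3*v^2 by ring] at h2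
      exact h2
    obtain ⟨s, hs⟩ := hquv
    have hs0 : 0 ≤ s := by nlinarith [sq_nonneg u, sq_nonneg v]
    -- bounds
    have hub : 2 * |u| ≤ (q:ℤ) - 1 := by
      have h := hu2
      rw [Int.abs_eq_natAbs]
      omega
    have hvb : 2 * |v| ≤ (q:ℤ) - 1 := by
      have h := hv2
      rw [Int.abs_eq_natAbs]
      omega
    have hu4 : 4*u^2 ≤ ((q:ℤ)-1)^2 := by nlinarith [sq_abs u, abs_nonneg u]
    have hv4 : 4*v^2 ≤ ((q:ℤ)-1)^2 := by nlinarith [sq_abs v, abs_nonneg v]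
    have hsq : s < (q:ℤ) := by
      have h1 : (q:ℤ)*s ≤ ((q:ℤ)-1)^2 := by linarith
      have h3 : ((q:ℤ)-1)^2 < q*q := by nlinarith
      exact lt_of_mul_lt_mul_left (lt_of_le_of_lt h1 h3) (le_of_lt hq0')
    by_cases hs0' : s = 0
    · -- q divides both x and y
      have h0 : u^2 + 3*v^2 = 0 := by rw [hs, hs0', mul_zero]
      have hu0 : u = 0 := by
        have h1 : u^2 = 0 := le_antisymm (by linarith [sq_nonneg v]) (sq_nonneg u)
        exact pow_eq_zero_iff (n := 2) (by norm_num) |>.mp h1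
      have hv0 : v = 0 := by
        have h1 : v^2 = 0 := le_antisymm (by linarith [sq_nonneg u]) (sq_nonneg v)
        exact pow_eq_zero_iff (n := 2) (by norm_num) |>.mp h1
      rw [hu0, sub_zero] at hu1
      rw [hv0, sub_zero] at hv1
      obtain ⟨X, hX⟩ := hu1
      obtain ⟨Y, hY⟩ := hv1
      have hq2 : ((q:ℤ))^2 * (X^2+3*Y^2) = (k:ℤ) * p := by
        rw [← hxy, hX, hY]; ring
      have hq2n : (q^2 : ℕ) ∣ k * p := by
        have h' : ((q^2:ℕ):ℤ) ∣ ((k * p : ℕ):ℤ) := by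
          push_cast
          exact ⟨X^2+3*Y^2, by rw [← hq2]⟩
        exact_mod_cast h'
      have hcop : Nat.Coprime (q^2) p :=
        Nat.Coprime.pow_left _ ((Nat.coprime_primes hqp hp).mpr (by omega))
      have hq2k : q^2 ∣ k := hcop.dvd_of_dvd_mul_right hq2n
      obtain ⟨j, hj⟩ := hq2k
      have hrep : X^2 + 3*Y^2 = (j:ℤ) * p := by
        refine mul_left_cancel₀ (a := ((q:ℤ))^2) (by positivity) ?_
        rw [hq2, hj]; push_cast; ring
      have hq2ge : 9 ≤ q^2 := by nlinarith
      have hj0 : 0 < j := by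
        rcases Nat.eq_zero_or_pos j with h | h
        · rw [h, mul_zero] at hj; omega
        · exact h
      have hjk : j < k := by
        rw [hj]
        calc j = 1 * j := (one_mul j).symm
        _ < q^2 * j := by
          apply Nat.mul_lt_mul_of_lt_of_le (by omega) (le_refl j) hj0
      exact ih j hjk hj0 (by omega) ⟨X, Y, hrep⟩
    · -- composition step
      have hspos : 0 < s := lt_of_le_of_ne hs0 (Ne.symm hs0')
      have hqX : (q:ℤ) ∣ x*u + 3*y*v := by
        rw [show x*u + 3*y*v = (x-u)*u + 3*((y-v)*v) + (u^2+3*v^2) by ring]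
        exact dvd_add (dvd_add (hu1.mul_right _) ((hv1.mul_right _).mul_left 3)) ⟨s, hs⟩
      have hqY : (q:ℤ) ∣ x*v - y*u := by
        rw [show x*v - y*u = (x-u)*v - (y-v)*u by ring]
        exact dvd_sub (hu1.mul_right _) (hv1.mul_right _)
      obtain ⟨X, hX⟩ := hqX
      obtain ⟨Y, hY⟩ := hqY
      obtain ⟨j, hj⟩ := hqk
      have hj0 : 0 < j := by
        rcases Nat.eq_zero_or_pos j with h | h
        · rw [h, mul_zero] at hj; omega
        · exact h
      set s' : ℕ := s.toNat with hs'def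
      have hs' : (s' : ℤ) = s := Int.toNat_of_nonneg hs0
      have hs'q : s' < q := by omega
      have hs'0 : 0 < s' := by omega
      have hrep : X^2 + 3*Y^2 = ((j * s' : ℕ):ℤ) * p := by
        refine mul_left_cancel₀ (a := ((q:ℤ))^2) (by positivity) ?_
        have hform := form_mul x y u v
        rw [hxy, hs, hX, hY, hj] at hform
        push_cast at hform ⊢
        rw [hs']
        linear_combination -hform
      have hklt : j * s' < k := by
        calc j * s' < j * q := Nat.mul_lt_mul_of_le_of_lt (le_refl j) hs'q hj0
        _ = k := by rw [hj, mul_comm]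
      have hk'0 : 0 < j * s' := Nat.mul_pos hj0 hs'0
      exact ih (j * s') hklt hk'0 (by omega) ⟨X, Y, hrep⟩

/-- If p % 3 = 1,  -3 is a square mod p. -/
lemma neg3_sq (p : ℕ) [hp : Fact p.Prime] (h3 : p % 3 = 1) : ∃ t : ZMod p, t^2 = -3 := by
  have hcard : Fintype.card (ZMod p)ˣ = p - 1 := ZMod.card_units p
  obtain ⟨g, hg⟩ := IsCyclic.exists_generator (α := (ZMod p)ˣ)
  have horder : orderOf g = p - 1 := by
    rw [orderOf_eq_card_of_forall_mem_zpowers hg, Nat.card_eq_fintype_card, hcard]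
  have hp7 : 7 ≤ p := by
    have h2 := hp.out.two_le
    by_contra hlt
    push_neg at hlt
    interval_cases p
    all_goals first | omega | exact absurd hp.out (by norm_num)
  have h3d : 3 ∣ p - 1 := by omega
  set n := (p - 1) / 3 with hn
  have hn3 : n * 3 = p - 1 := Nat.div_mul_cancel h3d
  have hnpos : 0 < n := by omega
  set w := g ^ n with hw
  have hword : orderOf w = 3 := by
    rw [hw, orderOf_pow, horder]
    have hgcd : Nat.gcd (p - 1) n = n := Nat.gcd_eq_right ⟨3, by omega⟩
    rw [hgcd, ← hn3, Nat.mul_div_cancel_left _ hnpos]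
  have hw3 : w ^ 3 = 1 := by rw [← hword]; exact pow_orderOf_eq_one w
  have hw1 : w ≠ 1 := by
    intro h
    rw [h, orderOf_one] at hword
    omega
  set ω : ZMod p := ↑w with hω
  have hω3 : ω ^ 3 = 1 := by
    have := congrArg (Units.val) hw3
    simpa using this
  have hω1 : ω ≠ 1 := fun h => hw1 (Units.ext h)
  have hfac : (ω - 1) * (ω^2 + ω + 1) = 0 := by
    have h30 : ω^3 - 1 = 0 := by rw [hω3]; ring
    linear_combination h30
  have hsum : ω^2 + ω + 1 = 0 := by
    rcases mul_eq_zero.mp hfac with h | h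
    · exact absurd (sub_eq_zero.mp h) hω1
    · exact h
  exact ⟨2*ω + 1, by linear_combination 4 * hsum⟩

/-- Conversely, a square root of -3 mod an odd prime p ≠ 3 forces p % 3 = 1. -/
lemma mod3_eq_one_of_neg3_sq (p : ℕ) [hp : Fact p.Prime] (hodd : p % 2 = 1) (hp3 : p ≠ 3)
    (t : ZMod p) (ht : t^2 = -3) : p % 3 = 1 := by
  have hnd2 : ¬ (p ∣ 2) := fun hd => by
    have := Nat.le_of_dvd two_pos hd
    have := hp.out.two_le
    omega
  have h2 : (2 : ZMod p) ≠ 0 := by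
    intro hh
    exact hnd2 ((ZMod.natCast_eq_zero_iff 2 p).mp (by exact_mod_cast hh))
  have h2' : IsUnit (2 : ZMod p) := isUnit_iff_ne_zero.mpr h2
  obtain ⟨u, hu2⟩ := h2'.exists_right_inv
  set ω : ZMod p := (t - 1) * u with hω
  have hsum : ω^2 + ω + 1 = 0 := by
    have e : (2 : ZMod p) * ω = t - 1 := by
      rw [hω, show (2:ZMod p) * ((t-1)*u) = (t-1) * ((2:ZMod p)*u) by ring, hu2, mul_one]
    have h4 : (4 : ZMod p) * (ω^2 + ω + 1) = t^2 + 3 := by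
      linear_combination (2*ω + t + 1) * e
    have h40 : (4 : ZMod p) ≠ 0 := by
      intro h
      have h22 := mul_eq_zero.mp (show (2:ZMod p)*2 = 0 by rw [← h]; ring)
      tauto
    have h0 : (4 : ZMod p) * (ω^2 + ω + 1) = 0 := by rw [h4, ht]; ring
    rcases mul_eq_zero.mp h0 with h | h
    · exact absurd h h40
    · exact h
  have hω1 : ω ≠ 1 := by
    intro h
    rw [h] at hsum
    have h30 : ((3:ℕ) : ZMod p) = 0 := by push_cast; linear_combination hsum
    have hd3 : p ∣ 3 := (ZMod.natCast_eq_zero_iff 3 p).mp h30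
    exact hp3 ((Nat.prime_dvd_prime_iff_eq hp.out (by norm_num)).mp hd3)
  have hω3 : ω ^ 3 = 1 := by linear_combination (ω - 1) * hsum
  have hord : orderOf ω = 3 := by
    have hdvd : orderOf ω ∣ 3 := orderOf_dvd_of_pow_eq_one hω3
    rcases (Nat.dvd_prime (by norm_num)).mp hdvd with h | h
    · exact absurd (orderOf_eq_one_iff.mp h) hω1
    · exact h
  have hω0 : ω ≠ 0 := by
    intro h
    rw [h] at hsum
    exact one_ne_zero (by linear_combination hsum)
  have hpow : ω ^ (p - 1) = 1 := ZMod.pow_card_sub_one_eq_one hω0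
  have h3d : 3 ∣ p - 1 := hord ▸ orderOf_dvd_of_pow_eq_one hpow
  have := hp.out.two_le
  omega

/-- Fermat: a prime p ≡ 1 mod 3 is of the form x² + 3y². -/
lemma fermat3 (p : ℕ) (hp : p.Prime) (h3 : p % 3 = 1) :
    ∃ x y : ℤ, x^2 + 3*y^2 = (p:ℤ) := by
  haveI : Fact p.Prime := ⟨hp⟩
  have hp7 : 7 ≤ p := by
    have h2 := hp.two_le
    by_contra hlt
    push_neg at hlt
    interval_cases p
    all_goals first | omega | exact absurd hp (by norm_num)
  have hpodd : p % 2 = 1 := by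
    rcases hp.eq_two_or_odd with h | h
    · omega
    · exact h
  obtain ⟨t, ht⟩ := neg3_sq p h3
  set m : ℤ := (t.val : ℤ) with hm
  have hdvd : (p:ℤ) ∣ m^2 + 3 := by
    rw [← ZMod.intCast_zmod_eq_zero_iff_dvd]
    rw [hm]
    push_cast
    have hv : ((t.val : ℕ) : ZMod p) = t := by simp [ZMod.natCast_val, ZMod.cast_id]
    rw [hv, ht]
    ring
  obtain ⟨u, hu1, hu2⟩ := centered p hpodd hp.one_lt m
  have hdvd2 : (p:ℤ) ∣ u^2 + 3 := by
    have hdiff : (p:ℤ) ∣ (m^2+3) - (u^2+3) := by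
      rw [show (m^2+3) - (u^2+3) = (m-u)*(m+u) by ring]
      exact hu1.mul_right _
    have h2 := dvd_sub hdvd hdiff
    rw [show (m^2+3) - ((m^2+3) - (u^2+3)) = u^2+3 by ring] at h2
    exact h2
  obtain ⟨s, hs⟩ := hdvd2
  have hp0' : (0:ℤ) < p := by exact_mod_cast hp.pos
  have hspos : 0 < s := by nlinarith [sq_nonneg u]
  have hub : 2 * |u| ≤ (p:ℤ) - 1 := by
    rw [Int.abs_eq_natAbs]
    omega
  have hu4 : 4*u^2 ≤ ((p:ℤ)-1)^2 := by nlinarith [sq_abs u, abs_nonneg u]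
  have hsp : s < (p:ℤ) := by
    have h1 : (p:ℤ)*s ≤ ((p:ℤ)-1)^2 := by nlinarith
    have h3' : ((p:ℤ)-1)^2 < (p:ℤ)*(p:ℤ) := by nlinarith
    exact lt_of_mul_lt_mul_left (lt_of_le_of_lt h1 h3') (le_of_lt hp0')
  set k : ℕ := s.toNat with hk
  have hks : (k:ℤ) = s := Int.toNat_of_nonneg hspos.le
  refine descent p hp hpodd k (by omega) (by omega) ⟨u, 1, ?_⟩
  rw [hks]
  linear_combination hs

lemma repr_of_vals : ∀ N : ℕ, 0 < N →
    (∀ p : ℕ, p.Prime → p % 3 = 2 → Even (padicValNat p N)) →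
    ∃ x y : ℤ, x^2 + 3*y^2 = (N:ℤ) := by
  intro N
  induction N using Nat.strong_induction_on with
  | _ N ih =>
  intro h0 hv
  rcases eq_or_lt_of_le (show 1 ≤ N from h0) with h1 | h2
  · exact ⟨1, 0, by rw [← h1]; norm_num⟩
  have hN1 : N ≠ 1 := by omega
  set p := N.minFac with hpdef
  have hpp : p.Prime := Nat.minFac_prime hN1
  haveI : Fact p.Prime := ⟨hpp⟩
  have hpd : p ∣ N := Nat.minFac_dvd N
  have hp2 : 2 ≤ p := hpp.two_le
  have hval : ∀ (a M : ℕ), N = a * M → a ≠ 0 → M ≠ 0 →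
      ∀ q : ℕ, q.Prime → q % 3 = 2 → ¬ q ∣ a → Even (padicValNat q M) := by
    intro a M hN ha hM q hq hq3 hnd
    haveI : Fact q.Prime := ⟨hq⟩
    have h := hv q hq hq3
    rw [hN, padicValNat.mul ha hM, padicValNat.eq_zero_of_not_dvd hnd, zero_add] at h
    exact h
  have hmod : p % 3 = 0 ∨ p % 3 = 1 ∨ p % 3 = 2 := by omega
  rcases hmod with hm0 | hm1 | hm2
  · -- p = 3
    have hp3 : p = 3 := ((Nat.prime_dvd_prime_iff_eq (by norm_num) hpp).mp
      (Nat.dvd_of_mod_eq_zero hm0)).symm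
    obtain ⟨M, hM⟩ := hpd
    have hM0 : M ≠ 0 := by rintro rfl; rw [mul_zero] at hM; omega
    have hMN : M < N := by
      rw [hM]
      calc M = 1 * M := (one_mul M).symm
      _ < p * M := Nat.mul_lt_mul_of_lt_of_le (by omega) (le_refl M) (by omega)
    obtain ⟨x, y, hxy⟩ := ih M hMN (by omega) (by
      intro q hq hq3
      exact hval p M hM (by omega) hM0 q hq hq3 (fun hd => by
        have := (Nat.prime_dvd_prime_iff_eq hq hpp).mp hd
        omega))
    refine ⟨3*y, x, ?_⟩
    have hNM : (N:ℤ) = 3 * (M:ℤ) := by rw [hM, hp3]; push_cast; ring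
    rw [hNM, ← hxy]
    ring
  · -- p ≡ 1 mod 3 : Fermat
    obtain ⟨u, v, huv⟩ := fermat3 p hpp hm1
    obtain ⟨M, hM⟩ := hpd
    have hM0 : M ≠ 0 := by rintro rfl; rw [mul_zero] at hM; omega
    have hMN : M < N := by
      rw [hM]
      calc M = 1 * M := (one_mul M).symm
      _ < p * M := Nat.mul_lt_mul_of_lt_of_le (by omega) (le_refl M) (by omega)
    obtain ⟨x, y, hxy⟩ := ih M hMN (by omega) (by
      intro q hq hq3
      exact hval p M hM (by omega) hM0 q hq hq3 (fun hd => by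
        have := (Nat.prime_dvd_prime_iff_eq hq hpp).mp hd
        omega))
    refine ⟨x*u+3*y*v, x*v-y*u, ?_⟩
    have hNM : (N:ℤ) = (p:ℤ) * (M:ℤ) := by rw [hM]; push_cast; ring
    rw [hNM, ← form_mul x y u v, hxy, huv]
    ring
  · -- p ≡ 2 mod 3 : even valuation
    have hv1 : 1 ≤ padicValNat p N := one_le_padicValNat_of_dvd h0.ne' hpd
    have hvev := hv p hpp hm2
    have hv2 : 2 ≤ padicValNat p N := by
      rcases hvev with ⟨t, ht⟩
      omega
    have hp2d : p^2 ∣ N := dvd_trans (pow_dvd_pow p hv2) pow_padicValNat_dvd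
    obtain ⟨M, hM⟩ := hp2d
    have hM0 : M ≠ 0 := by rintro rfl; rw [mul_zero] at hM; omega
    have hp4 : 4 ≤ p^2 := by nlinarith
    have hMN : M < N := by
      rw [hM]
      calc M = 1 * M := (one_mul M).symm
      _ < p^2 * M := Nat.mul_lt_mul_of_lt_of_le (by omega) (le_refl M) (by omega)
    obtain ⟨x, y, hxy⟩ := ih M hMN (by omega) (by
      intro q hq hq3
      haveI : Fact q.Prime := ⟨hq⟩
      by_cases hqp : q = p
      · subst hqp
        have hvN := hv p hq hq3
        rw [hM, padicValNat.mul (pow_ne_zero 2 hpp.pos.ne') hM0, padicValNat.prime_pow] at hvN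
        rcases hvN with ⟨t, ht⟩
        exact ⟨t - 1, by omega⟩
      · exact hval (p^2) M hM (by positivity) hM0 q hq hq3 (fun hd => by
          exact hqp ((Nat.prime_dvd_prime_iff_eq hq hpp).mp (hq.dvd_of_dvd_pow hd))))
    refine ⟨(p:ℤ)*x, (p:ℤ)*y, ?_⟩
    have hNM : (N:ℤ) = (p:ℤ)^2 * (M:ℤ) := by rw [hM]; push_cast; ring
    rw [hNM, ← hxy]
    ring

/-- For a prime `p ≡ 1 mod 4` with `p ≡ 2 mod 3`, the `p`-adic valuation of a nonzero
integer of the form `3d² - c²` is even. -/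
lemma val_even (p : ℕ) (hp : p.Prime) (hp4 : p % 4 = 1) (hp3 : p % 3 = 2) :
    ∀ n : ℕ, ∀ c d : ℤ, (3*d^2 - c^2).natAbs = n → 3*d^2 - c^2 ≠ 0 →
      Even (padicValNat p (3*d^2 - c^2).natAbs) := by
  haveI : Fact p.Prime := ⟨hp⟩
  have hpodd : p % 2 = 1 := by omega
  have hpne3 : p ≠ 3 := by omega
  have hp5 : 5 ≤ p := by
    by_contra hlt
    push_neg at hlt
    interval_cases p
    all_goals first | omega | exact absurd hp (by norm_num)
  intro n
  induction n using Nat.strong_induction_on with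
  | _ n ihn =>
  intro c d hn hne
  by_cases hdvd : (p:ℤ) ∣ (3*d^2 - c^2)
  · -- p divides: show p ∣ c and p ∣ d
    have hpd : (p:ℤ) ∣ d := by
      by_contra hnd
      -- work in ZMod p
      have hD : ((d : ZMod p)) ≠ 0 := by
        rw [Ne, ZMod.intCast_zmod_eq_zero_iff_dvd]
        exact hnd
      have hCD : 3 * (d:ZMod p)^2 = (c:ZMod p)^2 := by
        have h0 : ((3*d^2 - c^2 : ℤ) : ZMod p) = 0 :=
          (ZMod.intCast_zmod_eq_zero_iff_dvd _ p).mpr hdvd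
        push_cast at h0
        linear_combination h0
      obtain ⟨i, hi⟩ := ZMod.exists_sq_eq_neg_one_iff.mpr (by omega : p % 4 ≠ 3)
      rw [← sq] at hi
      set t : ZMod p := i * (c:ZMod p) * ((d:ZMod p))⁻¹ with htdef
      have ht : t^2 = -3 := by
        have hinv : (d:ZMod p) * ((d:ZMod p))⁻¹ = 1 := ZMod.mul_inv_of_unit _ (Ne.isUnit hD)
        calc (i * (c:ZMod p) * ((d:ZMod p))⁻¹)^2
            = i^2 * ((c:ZMod p)^2) * (((d:ZMod p))⁻¹)^2 := by ring
        _ = (-1) * (3 * (d:ZMod p)^2) * (((d:ZMod p))⁻¹)^2 := by rw [← hi, ← hCD]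
        _ = -3 * ((d:ZMod p) * ((d:ZMod p))⁻¹)^2 := by ring
        _ = -3 := by rw [hinv]; ring
      exact absurd (mod3_eq_one_of_neg3_sq p hpodd hpne3 t ht) (by omega)
    have hpc : (p:ℤ) ∣ c := by
      have h3 : (p:ℤ) ∣ 3*d^2 := by
        obtain ⟨d', rfl⟩ := hpd
        exact ⟨3*(p:ℤ)*d'^2, by ring⟩
      have h2 : (p:ℤ) ∣ c^2 := by
        have h4 := dvd_sub h3 hdvd
        rw [show 3*d^2 - (3*d^2 - c^2) = c^2 by ring] at h4
        exact h4
      exact (Int.prime_iff_natAbs_prime.mpr (by simpa using hp)).dvd_of_dvd_pow h2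
    obtain ⟨c', rfl⟩ := hpc
    obtain ⟨d', rfl⟩ := hpd
    have hfac : 3*((p:ℤ)*d')^2 - ((p:ℤ)*c')^2 = (p:ℤ)^2 * (3*d'^2 - c'^2) := by ring
    have hne' : 3*d'^2 - c'^2 ≠ 0 := by
      intro h0
      rw [hfac, h0, mul_zero] at hne
      exact hne rfl
    have habs : (3*((p:ℤ)*d')^2 - ((p:ℤ)*c')^2).natAbs = p^2 * (3*d'^2 - c'^2).natAbs := by
      rw [hfac, Int.natAbs_mul, Int.natAbs_pow, Int.natAbs_natCast]
    set n' := (3*d'^2 - c'^2).natAbs with hn'def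
    have hn'0 : n' ≠ 0 := fun h0 => hne' (Int.natAbs_eq_zero.mp h0)
    have hp25 : 25 ≤ p^2 := by nlinarith
    have hn'lt : n' < n := by
      have h1n : 1 < p^2 := by omega
      have h2n := Nat.mul_lt_mul_of_lt_of_le h1n (le_refl n') (Nat.pos_of_ne_zero hn'0)
      rw [← hn, habs]
      simpa using h2n
    have hrec := ihn n' hn'lt c' d' rfl hne'
    rw [← hn'def] at hrec
    rw [habs, padicValNat.mul (pow_ne_zero 2 hp.pos.ne') hn'0, padicValNat.prime_pow]
    obtain ⟨t, ht⟩ := hrec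
    exact ⟨t + 1, by omega⟩
  · rw [padicValNat.eq_zero_of_not_dvd (fun hd => hdvd (Int.natCast_dvd.mpr hd))]
    exact Even.zero

/-- If `a² + b² + c² = 3d²` with `gcd(a,b,c) = 1` and `d` odd, then
`2(a² + b²) = s² + 3r²` for some integers `r, s`. -/
theorem exists_rs (a b c d : ℤ) (hodd : Odd d)
    (h : a ^ 2 + b ^ 2 + c ^ 2 = 3 * d ^ 2)
    (hgcd : Int.gcd a (Int.gcd b c) = 1) :
    ∃ r s : ℤ, 2 * (a ^ 2 + b ^ 2) = s ^ 2 + 3 * r ^ 2 := by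
  have key8 : ∀ z : ℤ, Odd z → ((z : ZMod 8))^2 = 1 := by
    rintro z ⟨t, ht⟩
    have hz : (z : ZMod 8) = 2*(t : ZMod 8)+1 := by rw [ht]; push_cast; ring
    rw [hz]
    exact (by decide : ∀ s : ZMod 8, (2*s+1)^2 = 1) _
  have h8 : ((a : ZMod 8))^2 + (b : ZMod 8)^2 + (c : ZMod 8)^2 = 3 := by
    have hc8 := congrArg (fun z : ℤ => (z : ZMod 8)) h
    push_cast at hc8
    rw [key8 d hodd] at hc8
    rw [hc8]
    ring
  have ha : Odd a := by
    rcases Int.even_or_odd a with he | ho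
    · exfalso
      obtain ⟨m, hm⟩ := he
      have hA : (a : ZMod 8) = 2*(m : ZMod 8) := by rw [hm]; push_cast; ring
      rw [hA] at h8
      exact (by decide : ∀ s y z : ZMod 8, (2*s)^2 + y^2 + z^2 ≠ 3) _ _ _ h8
    · exact ho
  have hb : Odd b := by
    rcases Int.even_or_odd b with he | ho
    · exfalso
      obtain ⟨m, hm⟩ := he
      have hB : (b : ZMod 8) = 2*(m : ZMod 8) := by rw [hm]; push_cast; ring
      rw [hB] at h8
      exact (by decide : ∀ x s z : ZMod 8, x^2 + (2*s)^2 + z^2 ≠ 3) _ _ _ h8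
    · exact ho
  set A := a.natAbs with hAdef
  set B := b.natAbs with hBdef
  have hAa : ((A:ℤ))^2 = a^2 := by rw [hAdef]; push_cast [Int.natAbs_sq]; exact sq_abs a
  have hBb : ((B:ℤ))^2 = b^2 := by rw [hBdef]; push_cast [Int.natAbs_sq]; exact sq_abs b
  have hAodd : Odd A := Int.natAbs_odd.mpr ha
  have hBodd : Odd B := Int.natAbs_odd.mpr hb
  obtain ⟨k, hk⟩ := hAodd
  obtain ⟨l, hl⟩ := hBodd
  set N : ℕ := 2*(k*k+k+l*l+l)+1 with hNdef
  set T : ℕ := A^2 + B^2 with hTdef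
  have hTN : T = 2*N := by rw [hTdef, hNdef, hk, hl]; ring
  have hNodd : ¬ 2 ∣ N := by omega
  have hN0 : 0 < N := by omega
  have hT : (T:ℤ) = a^2 + b^2 := by rw [hTdef]; push_cast; rw [hAa, hBb]
  have hTc : 3*d^2 - c^2 = (T:ℤ) := by rw [hT]; linarith [h]
  have hTne : (3*d^2 - c^2) ≠ 0 := by
    rw [hTc]
    exact_mod_cast (by omega : T ≠ 0)
  have hvals : ∀ p : ℕ, p.Prime → p % 3 = 2 → Even (padicValNat p N) := by
    intro p hp hp3
    by_cases hp2 : p = 2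
    · subst hp2
      rw [padicValNat.eq_zero_of_not_dvd hNodd]
      exact Even.zero
    · have hpodd : p % 2 = 1 := hp.eq_two_or_odd.resolve_left hp2
      haveI : Fact p.Prime := ⟨hp⟩
      have hvTN : padicValNat p T = padicValNat p N := by
        rw [hTN, padicValNat.mul (by norm_num) (by omega),
          padicValNat.eq_zero_of_not_dvd (fun hd =>
            hp2 ((Nat.prime_dvd_prime_iff_eq hp Nat.prime_two).mp hd)), zero_add]
      have hp41 : p % 4 = 1 ∨ p % 4 = 3 := by omega
      rcases hp41 with h41 | h43
      · have hev := val_even p hp h41 hp3 (3*d^2-c^2).natAbs c d rfl hTne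
        have habsT : (3*d^2-c^2).natAbs = T := by rw [hTc]; exact Int.natAbs_natCast T
        rw [habsT] at hev
        rw [← hvTN]
        exact hev
      · have hev : Even (padicValNat p T) := by
          by_cases hpT : p ∣ T
          · exact Nat.eq_sq_add_sq_iff.mp ⟨A, B, hTdef⟩ p (Nat.mem_primeFactors.mpr ⟨hp, hpT, by omega⟩) h43
          · rw [padicValNat.eq_zero_of_not_dvd hpT]; exact Even.zero
        rw [← hvTN]
        exact hev
  obtain ⟨x, y, hxy⟩ := repr_of_vals N hN0 hvals
  refine ⟨2*y, 2*x, ?_⟩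
  have hgoal : 2*(a^2+b^2) = 2*(T:ℤ) := by rw [hT]
  rw [hgoal]
  have h2T : (T:ℤ) = 2*(N:ℤ) := by exact_mod_cast congrArg (Nat.cast (R := ℤ)) hTN
  rw [h2T, ← hxy]
  ring
end
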